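/- arXiv:1905.10358 — 11 statements merged into one kernel-verified Lean document; each statement's English description precedes it below -/
import Mathlib

section
/- Let m, n be positive integers, A ∈ ℝ^{m×n}, b ∈ ℝ^m, and let L be a natural number with 0 < L < m. Suppose A satisfies the 2-Absolute Range Property of order L for some ψ ∈ (0,1). Then for all x, y ∈ ℝ^n: ‖|Ax|² − |Ay|²‖₁ ≤ ((1+ψ)/(1−ψ)) · ( ‖|Ax|² − b‖₁ − ‖|Ay|² − b‖₁ + 2·σ²_L(y) ). -/
/-!
Let `d = |Ax|² - |Ay|²` and take `T` of size `L` attaining `σ²_L(y)`. The triangle inequality,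
applied on `T` to `|Ay|² - b` and on `Tᶜ` to `d`, gives
`‖d_{Tᶜ}‖₁ - ‖d_T‖₁ ≤ ‖|Ax|² - b‖₁ - ‖|Ay|² - b‖₁ + 2 σ²_L(y)`,
and the range property `‖d_T‖₁ ≤ ψ ‖d_{Tᶜ}‖₁` bounds the left side below by `(1 - ψ)/(1 + ψ) ‖d‖₁`.
-/

open Finset

/-- `sigmaL L v` : the minimum over subsets `T` of cardinality `L` of the sum of `|v i|`
over the complement of `T`, i.e. the sum of all but the `L` largest entries of `|v|`. -/
noncomputable def sigmaL {m : ℕ} (L : ℕ) (v : Fin m → ℝ) : ℝ :=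
  ⨅ T : {T : Finset (Fin m) // T.card = L}, ∑ i ∈ (T : Finset (Fin m))ᶜ, |v i|

theorem exists_card_eq_sigmaL_eq {m L : ℕ} (hL : L ≤ m) (v : Fin m → ℝ) :
    ∃ T : Finset (Fin m), T.card = L ∧ sigmaL L v = ∑ i ∈ Tᶜ, |v i| := by
  obtain ⟨T, -, hT⟩ := exists_subset_card_eq (s := (univ : Finset (Fin m))) (by simpa using hL)
  have : Nonempty {T : Finset (Fin m) // T.card = L} := ⟨⟨T, hT⟩⟩
  obtain ⟨T₀, hT₀⟩ :=
    Finite.exists_min fun T : {T : Finset (Fin m) // T.card = L} => ∑ i ∈ (T : Finset _)ᶜ, |v i|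
  exact ⟨T₀, T₀.2, le_antisymm (ciInf_le (Set.finite_range _).bddBelow T₀) (le_ciInf hT₀)⟩

section

variable {ι : Type*} [Fintype ι] [DecidableEq ι]

theorem sum_compl_abs_sub_sub_sum_abs_sub_le (p q b : ι → ℝ) (T : Finset ι) :
    ∑ i ∈ Tᶜ, |p i - q i| - ∑ i ∈ T, |p i - q i| ≤
      ∑ i, |p i - b i| - ∑ i, |q i - b i| + 2 * ∑ i ∈ Tᶜ, |q i - b i| := by
  have on_T : ∑ i ∈ T, (|q i - b i| - |p i - q i|) ≤ ∑ i ∈ T, |p i - b i| :=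
    sum_le_sum fun i _ => by linarith [abs_sub_le (q i) (p i) (b i), abs_sub_comm (q i) (p i)]
  have on_compl : ∑ i ∈ Tᶜ, (|p i - q i| - |q i - b i|) ≤ ∑ i ∈ Tᶜ, |p i - b i| :=
    sum_le_sum fun i _ => by linarith [abs_sub_le (p i) (b i) (q i), abs_sub_comm (b i) (q i)]
  rw [sum_sub_distrib] at on_T on_compl
  rw [← sum_add_sum_compl T fun i => |p i - b i|, ← sum_add_sum_compl T fun i => |q i - b i|]
  linarith

theorem sum_le_of_sum_le_mul_sum_compl {f : ι → ℝ} {T : Finset ι} {ψ X : ℝ}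
    (hψ₀ : -1 ≤ ψ) (hψ₁ : ψ < 1) (hT : ∑ i ∈ T, f i ≤ ψ * ∑ i ∈ Tᶜ, f i)
    (hX : ∑ i ∈ Tᶜ, f i - ∑ i ∈ T, f i ≤ X) :
    ∑ i, f i ≤ (1 + ψ) / (1 - ψ) * X := by
  rw [← sum_add_sum_compl T, div_mul_eq_mul_div, le_div_iff₀ (by linarith)]
  nlinarith [mul_le_mul_of_nonneg_left hX (by linarith : (0 : ℝ) ≤ 1 + ψ)]

end

theorem stmt_0_general (m n : ℕ)
    (A : Fin m → Fin n → ℝ) (b : Fin m → ℝ)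
    (L : ℕ) (hLm : L < m)
    (ψ : ℝ) (hψ0 : 0 < ψ) (hψ1 : ψ < 1)
    (hARP : ∀ (x y : Fin n → ℝ) (T : Finset (Fin m)), T.card ≤ L →
      ∑ i ∈ T, |(∑ j, A i j * x j) ^ 2 - (∑ j, A i j * y j) ^ 2| ≤
        ψ * ∑ i ∈ Tᶜ, |(∑ j, A i j * x j) ^ 2 - (∑ j, A i j * y j) ^ 2|) :
    ∀ x y : Fin n → ℝ,
      ∑ i, |(∑ j, A i j * x j) ^ 2 - (∑ j, A i j * y j) ^ 2| ≤
        ((1 + ψ) / (1 - ψ)) *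
          ((∑ i, |(∑ j, A i j * x j) ^ 2 - b i|) - (∑ i, |(∑ j, A i j * y j) ^ 2 - b i|)
            + 2 * sigmaL L (fun i => (∑ j, A i j * y j) ^ 2 - b i)) := by
  intro x y
  obtain ⟨T, hTL, hσ⟩ := exists_card_eq_sigmaL_eq hLm.le fun i => (∑ j, A i j * y j) ^ 2 - b i
  rw [hσ]
  exact sum_le_of_sum_le_mul_sum_compl (by linarith) hψ1 (hARP x y T hTL.le)
    (sum_compl_abs_sub_sub_sum_abs_sub_le _ _ b T)

theorem stmt_0 (m n : ℕ) (hm : 0 < m) (hn : 0 < n)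
    (A : Fin m → Fin n → ℝ) (b : Fin m → ℝ)
    (L : ℕ) (hL0 : 0 < L) (hLm : L < m)
    (ψ : ℝ) (hψ0 : 0 < ψ) (hψ1 : ψ < 1)
    (hARP : ∀ (x y : Fin n → ℝ) (T : Finset (Fin m)), T.card ≤ L →
      ∑ i ∈ T, |(∑ j, A i j * x j) ^ 2 - (∑ j, A i j * y j) ^ 2| ≤
        ψ * ∑ i ∈ Tᶜ, |(∑ j, A i j * x j) ^ 2 - (∑ j, A i j * y j) ^ 2|) :
    ∀ x y : Fin n → ℝ,
      ∑ i, |(∑ j, A i j * x j) ^ 2 - (∑ j, A i j * y j) ^ 2| ≤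
        ((1 + ψ) / (1 - ψ)) *
          ((∑ i, |(∑ j, A i j * x j) ^ 2 - b i|) - (∑ i, |(∑ j, A i j * y j) ^ 2 - b i|)
            + 2 * sigmaL L (fun i => (∑ j, A i j * y j) ^ 2 - b i)) :=
  stmt_0_general m n A b L hLm ψ hψ0 hψ1 hARP
end

section
/- Let m, n be positive integers, A ∈ ℝ^{m×n}, b ∈ ℝ^m, and let L be a natural number with 0 < L < m. Suppose A satisfies the 2-Absolute Range Property of order L for some ψ ∈ (0,1), and suppose x* ∈ ℝ^n satisfies ‖|Ax*|² − b‖₀ ≤ L. Then: (i) ‖|Ax|² − b‖₁ ≥ ‖|Ax*|² − b‖₁ for all x ∈ ℝ^n, i.e., x* is a global minimizer of f₂(x) := ‖|Ax|² − b‖₁; (ii) for every x ∈ ℝ^n, ‖|Ax|² − |Ax*|²‖₁ ≤ (2(1+ψ)/(1−ψ)) · σ²_L(x); (iii) if x̃ is any other global minimizer of f₂, then |Ax̃| = |Ax*| componentwise. -/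
/-!
Write `r = |Ax|² - b` and `s = |Ax*|² - b` for the residuals, so that `r - s = |Ax|² - |Ax*|²`
and `s` vanishes off a set `S` of at most `L` indices. On `Sᶜ` the difference `r - s` is the
residual `r` itself, so the range property on `S` gives
`‖s‖₁ ≤ ‖r_S‖₁ + ‖(r - s)_S‖₁ ≤ ‖r‖₁ - (1 - ψ) ‖r_{Sᶜ}‖₁`, which yields (i), and for a second
minimiser forces `r = s` off `S` and then everywhere, which is (iii). For (ii), the range property
on `S` and on an arbitrary `T` with `|T| = L`, together with `r - s = r` on `Sᶜ ∩ Tᶜ`, bounds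
`‖(r - s)_{Sᶜ}‖₁` and hence `‖r - s‖₁` by `(1 + ψ) / (1 - ψ) · ‖r_{Tᶜ}‖₁`.
-/

open Finset

section RangeProperty

variable {ι : Type*} [DecidableEq ι]

lemma sum_le_sum_add_sum_of_subset_union {f : ι → ℝ} (hf : ∀ i, 0 ≤ f i) {U V W : Finset ι}
    (h : U ⊆ V ∪ W) : ∑ i ∈ U, f i ≤ ∑ i ∈ V, f i + ∑ i ∈ W, f i := by
  have hunion := sum_union_inter (s₁ := V) (s₂ := W) (f := f)
  have hsub := sum_le_sum_of_subset_of_nonneg h fun i _ _ => hf i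
  have hinter := sum_nonneg fun i (_ : i ∈ V ∩ W) => hf i
  linarith

variable [Fintype ι] {ψ : ℝ} {S T : Finset ι}

lemma sum_abs_le_one_add_mul_sum_compl {d : ι → ℝ}
    (hS : ∑ i ∈ S, |d i| ≤ ψ * ∑ i ∈ Sᶜ, |d i|) :
    ∑ i, |d i| ≤ (1 + ψ) * ∑ i ∈ Sᶜ, |d i| := by
  rw [← sum_add_sum_compl S]
  linarith

lemma eq_of_sum_abs_sub_le_of_eq_on_compl {r s : ι → ℝ}
    (hS : ∑ i ∈ S, |r i - s i| ≤ ψ * ∑ i ∈ Sᶜ, |r i - s i|) (hrs : ∀ i ∉ S, r i = s i) :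
    r = s := by
  have hcompl : ∑ i ∈ Sᶜ, |r i - s i| = 0 :=
    sum_eq_zero fun i hi => by rw [hrs i (mem_compl.mp hi), sub_self, abs_zero]
  have hsum : ∑ i, |r i - s i| = 0 :=
    le_antisymm (by simpa [hcompl] using sum_abs_le_one_add_mul_sum_compl hS)
      (sum_nonneg fun i _ => abs_nonneg _)
  funext i
  have := (sum_eq_zero_iff_of_nonneg fun i _ => abs_nonneg (r i - s i)).mp hsum i (mem_univ i)
  linarith [abs_eq_zero.mp this]

variable {r s : ι → ℝ}

lemma sum_abs_add_mul_sum_compl_le (hs : ∀ i ∉ S, s i = 0)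
    (hS : ∑ i ∈ S, |r i - s i| ≤ ψ * ∑ i ∈ Sᶜ, |r i - s i|) :
    ∑ i, |s i| + (1 - ψ) * ∑ i ∈ Sᶜ, |r i| ≤ ∑ i, |r i| := by
  have hcompl : ∑ i ∈ Sᶜ, |r i - s i| = ∑ i ∈ Sᶜ, |r i| :=
    sum_congr rfl fun i hi => by rw [hs i (mem_compl.mp hi), sub_zero]
  have hs_supp : ∑ i, |s i| = ∑ i ∈ S, |s i| :=
    (sum_subset (subset_univ S) fun i _ hi => by rw [hs i hi, abs_zero]).symm
  have htriangle : ∑ i ∈ S, |s i| ≤ ∑ i ∈ S, |r i| + ∑ i ∈ S, |r i - s i| := by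
    rw [← sum_add_distrib]
    exact sum_le_sum fun i _ => by
      linarith [abs_sub_abs_le_abs_sub (s i) (r i), abs_sub_comm (s i) (r i)]
  rw [hcompl] at hS
  rw [← sum_add_sum_compl S (fun i => |r i|)]
  linarith

lemma eq_of_sum_abs_le_sum_abs (hψ : ψ < 1) (hs : ∀ i ∉ S, s i = 0)
    (hS : ∑ i ∈ S, |r i - s i| ≤ ψ * ∑ i ∈ Sᶜ, |r i - s i|) (h : ∑ i, |r i| ≤ ∑ i, |s i|) :
    r = s := by
  have hzero : ∑ i ∈ Sᶜ, |r i| = 0 := by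
    nlinarith [sum_abs_add_mul_sum_compl_le hs hS,
      sum_nonneg fun i (_ : i ∈ Sᶜ) => abs_nonneg (r i)]
  refine eq_of_sum_abs_sub_le_of_eq_on_compl hS fun i hi => ?_
  rw [hs i hi, ← abs_eq_zero]
  exact (sum_eq_zero_iff_of_nonneg fun i _ => abs_nonneg _).mp hzero i (mem_compl.mpr hi)

lemma one_sub_mul_sum_compl_abs_sub_le (hψ : 0 ≤ ψ) (hs : ∀ i ∉ S, s i = 0)
    (hS : ∑ i ∈ S, |r i - s i| ≤ ψ * ∑ i ∈ Sᶜ, |r i - s i|)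
    (hT : ∑ i ∈ T, |r i - s i| ≤ ψ * ∑ i ∈ Tᶜ, |r i - s i|) :
    (1 - ψ) * ∑ i ∈ Sᶜ, |r i - s i| ≤ ∑ i ∈ Tᶜ, |r i| := by
  set d : ι → ℝ := fun i => |r i - s i|
  have hd : ∀ i, 0 ≤ d i := fun i => abs_nonneg _
  have hρ : ∑ i ∈ Sᶜ ∩ Tᶜ, d i ≤ ∑ i ∈ Tᶜ, |r i| :=
    calc ∑ i ∈ Sᶜ ∩ Tᶜ, d i = ∑ i ∈ Sᶜ ∩ Tᶜ, |r i| :=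
          sum_congr rfl fun i hi => by
            simp only [d, hs i (mem_compl.mp (mem_inter.mp hi).1), sub_zero]
      _ ≤ ∑ i ∈ Tᶜ, |r i| :=
          sum_le_sum_of_subset_of_nonneg inter_subset_right fun i _ _ => abs_nonneg _
  have hTc : ∑ i ∈ Tᶜ, d i ≤ ∑ i ∈ S, d i + ∑ i ∈ Sᶜ ∩ Tᶜ, d i :=
    sum_le_sum_add_sum_of_subset_union hd fun i hi => by by_cases i ∈ S <;> simp_all
  have hSc : ∑ i ∈ Sᶜ, d i ≤ ∑ i ∈ T, d i + ∑ i ∈ Sᶜ ∩ Tᶜ, d i :=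
    sum_le_sum_add_sum_of_subset_union hd fun i hi => by by_cases i ∈ T <;> simp_all
  -- chaining the four bounds gives `(1 - ψ²) ‖d_{Sᶜ}‖₁ ≤ (1 + ψ) ‖d_{Sᶜ ∩ Tᶜ}‖₁`
  have hSc_nonneg : 0 ≤ ∑ i ∈ Sᶜ, d i := sum_nonneg fun i _ => hd i
  nlinarith

lemma sum_abs_sub_le_mul_sum_compl (hψ0 : 0 ≤ ψ) (hψ1 : ψ < 1) (hs : ∀ i ∉ S, s i = 0)
    (hS : ∑ i ∈ S, |r i - s i| ≤ ψ * ∑ i ∈ Sᶜ, |r i - s i|)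
    (hT : ∑ i ∈ T, |r i - s i| ≤ ψ * ∑ i ∈ Tᶜ, |r i - s i|) :
    ∑ i, |r i - s i| ≤ (1 + ψ) / (1 - ψ) * ∑ i ∈ Tᶜ, |r i| := by
  have h1ψ : 0 < 1 - ψ := by linarith
  rw [div_mul_eq_mul_div, le_div_iff₀ h1ψ]
  calc (∑ i, |r i - s i|) * (1 - ψ) ≤ ((1 + ψ) * ∑ i ∈ Sᶜ, |r i - s i|) * (1 - ψ) := by
        gcongr
        exact sum_abs_le_one_add_mul_sum_compl hS
    _ = (1 + ψ) * ((1 - ψ) * ∑ i ∈ Sᶜ, |r i - s i|) := by ring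
    _ ≤ (1 + ψ) * ∑ i ∈ Tᶜ, |r i| := by
        gcongr
        exact one_sub_mul_sum_compl_abs_sub_le hψ0 hs hS hT

end RangeProperty

lemma le_mul_sigmaL {m L : ℕ} (hL : L ≤ m) {v : Fin m → ℝ} {a C : ℝ} (hC : 0 ≤ C)
    (h : ∀ T : Finset (Fin m), T.card = L → a ≤ C * ∑ i ∈ Tᶜ, |v i|) :
    a ≤ C * sigmaL L v := by
  obtain ⟨T₀, -, hT₀⟩ := exists_subset_card_eq (s := (univ : Finset (Fin m))) (by simpa using hL)
  have : Nonempty {T : Finset (Fin m) // T.card = L} := ⟨⟨T₀, hT₀⟩⟩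
  rw [sigmaL, Real.mul_iInf_of_nonneg hC]
  exact le_ciInf fun T => h T T.2

theorem stmt_2_general (m n : ℕ)
    (A : Fin m → Fin n → ℝ) (b : Fin m → ℝ)
    (L : ℕ) (hLm : L < m)
    (ψ : ℝ) (hψ0 : 0 < ψ) (hψ1 : ψ < 1)
    (hARP : ∀ (x y : Fin n → ℝ) (T : Finset (Fin m)), T.card ≤ L →
      ∑ i ∈ T, |(∑ j, A i j * x j) ^ 2 - (∑ j, A i j * y j) ^ 2| ≤
        ψ * ∑ i ∈ Tᶜ, |(∑ j, A i j * x j) ^ 2 - (∑ j, A i j * y j) ^ 2|)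
    (xs : Fin n → ℝ)
    (hsparse : (univ.filter fun i => (∑ j, A i j * xs j) ^ 2 - b i ≠ 0).card ≤ L) :
    (∀ x : Fin n → ℝ,
        ∑ i, |(∑ j, A i j * x j) ^ 2 - b i| ≥ ∑ i, |(∑ j, A i j * xs j) ^ 2 - b i|) ∧
    (∀ x : Fin n → ℝ,
        ∑ i, |(∑ j, A i j * x j) ^ 2 - (∑ j, A i j * xs j) ^ 2| ≤
          (2 * (1 + ψ) / (1 - ψ)) * sigmaL L (fun i => (∑ j, A i j * x j) ^ 2 - b i)) ∧
    (∀ xt : Fin n → ℝ,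
        (∀ x : Fin n → ℝ,
          ∑ i, |(∑ j, A i j * xt j) ^ 2 - b i| ≤ ∑ i, |(∑ j, A i j * x j) ^ 2 - b i|) →
        ∀ i, |∑ j, A i j * xt j| = |∑ j, A i j * xs j|) := by
  set r : (Fin n → ℝ) → Fin m → ℝ := fun x i => (∑ j, A i j * x j) ^ 2 - b i
  set S := univ.filter fun i => r xs i ≠ 0
  have hs : ∀ i ∉ S, r xs i = 0 := fun i hi => by simpa [S] using hi
  have hrange : ∀ x (T : Finset (Fin m)), T.card ≤ L →
      ∑ i ∈ T, |r x i - r xs i| ≤ ψ * ∑ i ∈ Tᶜ, |r x i - r xs i| := by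
    simpa only [r, sub_sub_sub_cancel_right] using fun x => hARP x xs
  have h1ψ : 0 < 1 - ψ := by linarith
  refine ⟨fun x => ?_, fun x => ?_, fun xt hxt i => ?_⟩
  · nlinarith [sum_abs_add_mul_sum_compl_le hs (hrange x S hsparse),
      sum_nonneg fun i (_ : i ∈ Sᶜ) => abs_nonneg (r x i)]
  · simp only [show ∀ i, (∑ j, A i j * x j) ^ 2 - (∑ j, A i j * xs j) ^ 2 = r x i - r xs i from
      fun i => (sub_sub_sub_cancel_right _ _ _).symm]
    refine le_mul_sigmaL hLm.le (by positivity) fun T hT =>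
      (sum_abs_sub_le_mul_sum_compl hψ0.le hψ1 hs (hrange x S hsparse) (hrange x T hT.le)).trans ?_
    gcongr
    linarith
  · have hsq := congrFun (eq_of_sum_abs_le_sum_abs hψ1 hs (hrange xt S hsparse) (hxt xs)) i
    exact (sq_eq_sq_iff_abs_eq_abs _ _).mp (by simpa [r] using hsq)

theorem stmt_2 (m n : ℕ) (hm : 0 < m) (hn : 0 < n)
    (A : Fin m → Fin n → ℝ) (b : Fin m → ℝ)
    (L : ℕ) (hL0 : 0 < L) (hLm : L < m)
    (ψ : ℝ) (hψ0 : 0 < ψ) (hψ1 : ψ < 1)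
    (hARP : ∀ (x y : Fin n → ℝ) (T : Finset (Fin m)), T.card ≤ L →
      ∑ i ∈ T, |(∑ j, A i j * x j) ^ 2 - (∑ j, A i j * y j) ^ 2| ≤
        ψ * ∑ i ∈ Tᶜ, |(∑ j, A i j * x j) ^ 2 - (∑ j, A i j * y j) ^ 2|)
    (xs : Fin n → ℝ)
    (hsparse : (univ.filter fun i => (∑ j, A i j * xs j) ^ 2 - b i ≠ 0).card ≤ L) :
    (∀ x : Fin n → ℝ,
        ∑ i, |(∑ j, A i j * x j) ^ 2 - b i| ≥ ∑ i, |(∑ j, A i j * xs j) ^ 2 - b i|) ∧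
    (∀ x : Fin n → ℝ,
        ∑ i, |(∑ j, A i j * x j) ^ 2 - (∑ j, A i j * xs j) ^ 2| ≤
          (2 * (1 + ψ) / (1 - ψ)) * sigmaL L (fun i => (∑ j, A i j * x j) ^ 2 - b i)) ∧
    (∀ xt : Fin n → ℝ,
        (∀ x : Fin n → ℝ,
          ∑ i, |(∑ j, A i j * xt j) ^ 2 - b i| ≤ ∑ i, |(∑ j, A i j * x j) ^ 2 - b i|) →
        ∀ i, |∑ j, A i j * xt j| = |∑ j, A i j * xs j|) :=
  stmt_2_general m n A b L hLm ψ hψ0 hψ1 hARP xs hsparse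
end

section
/- Let m, n be positive integers, A ∈ ℝ^{m×n}, b ∈ ℝ^m, and let L be a natural number with 0 < L < m. Suppose A satisfies the 1-Absolute Range Property of order L for some ψ ∈ (0,1), and suppose x* ∈ ℝ^n satisfies ‖|Ax*| − b‖₀ ≤ L. Then: (i) ‖|Ax| − b‖₁ ≥ ‖|Ax*| − b‖₁ for all x ∈ ℝ^n, i.e., x* is a global minimizer of f₁(x) := ‖|Ax| − b‖₁; (ii) for every x ∈ ℝ^n, ‖|Ax| − |Ax*|‖₁ ≤ (2(1+ψ)/(1−ψ)) · σ¹_L(x); (iii) if x̃ is any other global minimizer of f₁, then |Ax̃| = |Ax*| componentwise. -/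
open Finset

/-!
Let `S` be the support of `|Ax*| - b` and `d = |Ax| - |Ax*|`. The range property on `S`
reads `(1 + ψ) ‖d_S‖₁ ≤ ψ ‖d‖₁`. Off `S` we have `|Ax*| = b`, so `|Ax| - b` agrees with `d`
there, while on `S` the triangle inequality costs at most `‖d_S‖₁`; together this gives
`(1 - ψ) ‖d‖₁ ≤ (1 + ψ) (f₁(x) - f₁(x*))`, which yields (i) and (iii). For (ii), apply the
range property also to a set `T` of `L` indices: `‖d‖₁ ≤ ‖d_S‖₁ + ‖d_T‖₁ + ‖d_{(S ∪ T)ᶜ}‖₁`,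
and off `S ∪ T` the vector `d` agrees with `|Ax| - b`.
-/

section RangeProperty

variable {ι : Type*} [Fintype ι] [DecidableEq ι] {ψ : ℝ}

lemma one_add_mul_sum_le_mul_sum {f : ι → ℝ} {T : Finset ι}
    (hT : ∑ i ∈ T, f i ≤ ψ * ∑ i ∈ Tᶜ, f i) :
    (1 + ψ) * ∑ i ∈ T, f i ≤ ψ * ∑ i, f i := by
  rw [← sum_add_sum_compl T f]
  linarith

lemma one_sub_mul_sum_abs_sub_le_mul_sub (hψ : -1 ≤ ψ) {v w b : ι → ℝ} {S : Finset ι}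
    (hwb : ∀ i ∉ S, w i = b i)
    (hS : ∑ i ∈ S, |v i - w i| ≤ ψ * ∑ i ∈ Sᶜ, |v i - w i|) :
    (1 - ψ) * ∑ i, |v i - w i| ≤ (1 + ψ) * (∑ i, |v i - b i| - ∑ i, |w i - b i|) := by
  have hS' := one_add_mul_sum_le_mul_sum hS
  have hwb_S : ∑ i, |w i - b i| = ∑ i ∈ S, |w i - b i| :=
    (sum_subset (subset_univ S) fun i _ hi => by simp [hwb i hi]).symm
  have hvb_Sc : ∑ i ∈ Sᶜ, |v i - b i| = ∑ i ∈ Sᶜ, |v i - w i| :=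
    sum_congr rfl fun i hi => by rw [hwb i (mem_compl.mp hi)]
  have htriangle : ∑ i ∈ S, |w i - b i| ≤ ∑ i ∈ S, |v i - b i| + ∑ i ∈ S, |v i - w i| := by
    rw [← sum_add_distrib]
    refine sum_le_sum fun i _ => ?_
    rw [abs_sub_comm (v i) (w i), add_comm]
    exact abs_sub_le _ _ _
  have hgap : ∑ i, |v i - w i| - 2 * ∑ i ∈ S, |v i - w i| ≤
      ∑ i, |v i - b i| - ∑ i, |w i - b i| := by
    linarith [sum_add_sum_compl S fun i => |v i - b i|,
      sum_add_sum_compl S fun i => |v i - w i|]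
  linarith [mul_le_mul_of_nonneg_left hgap (by linarith : (0 : ℝ) ≤ 1 + ψ)]

lemma sum_abs_sub_le_sum_abs_sub (hψ₀ : -1 < ψ) (hψ₁ : ψ ≤ 1) {v w b : ι → ℝ} {S : Finset ι}
    (hwb : ∀ i ∉ S, w i = b i)
    (hS : ∑ i ∈ S, |v i - w i| ≤ ψ * ∑ i ∈ Sᶜ, |v i - w i|) :
    ∑ i, |w i - b i| ≤ ∑ i, |v i - b i| := by
  have key := one_sub_mul_sum_abs_sub_le_mul_sub hψ₀.le hwb hS
  have hnonneg : 0 ≤ (1 - ψ) * ∑ i, |v i - w i| :=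
    mul_nonneg (by linarith) (sum_nonneg fun i _ => abs_nonneg _)
  linarith [(mul_nonneg_iff_of_pos_left (by linarith : (0 : ℝ) < 1 + ψ)).mp (hnonneg.trans key)]

lemma eq_of_sum_abs_sub_le (hψ₀ : -1 ≤ ψ) (hψ₁ : ψ < 1) {v w b : ι → ℝ} {S : Finset ι}
    (hwb : ∀ i ∉ S, w i = b i)
    (hS : ∑ i ∈ S, |v i - w i| ≤ ψ * ∑ i ∈ Sᶜ, |v i - w i|)
    (hv : ∑ i, |v i - b i| ≤ ∑ i, |w i - b i|) :
    v = w := by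
  have key := one_sub_mul_sum_abs_sub_le_mul_sub hψ₀ hwb hS
  have hzero : ∑ i, |v i - w i| = 0 :=
    le_antisymm (by nlinarith) (sum_nonneg fun i _ => abs_nonneg _)
  funext i
  have := (sum_eq_zero_iff_of_nonneg fun i _ => abs_nonneg (v i - w i)).mp hzero i (mem_univ i)
  exact sub_eq_zero.mp (abs_eq_zero.mp this)

lemma one_sub_mul_sum_abs_sub_le_sum_compl (hψ : -1 ≤ ψ) {v w b : ι → ℝ} {S T : Finset ι}
    (hwb : ∀ i ∉ S, w i = b i)
    (hS : ∑ i ∈ S, |v i - w i| ≤ ψ * ∑ i ∈ Sᶜ, |v i - w i|)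
    (hT : ∑ i ∈ T, |v i - w i| ≤ ψ * ∑ i ∈ Tᶜ, |v i - w i|) :
    (1 - ψ) * ∑ i, |v i - w i| ≤ (1 + ψ) * ∑ i ∈ Tᶜ, |v i - b i| := by
  have hS' := one_add_mul_sum_le_mul_sum hS
  have hT' := one_add_mul_sum_le_mul_sum hT
  have hunion : ∑ i ∈ S ∪ T, |v i - w i| ≤ ∑ i ∈ S, |v i - w i| + ∑ i ∈ T, |v i - w i| := by
    rw [← sum_union_inter]
    exact le_add_of_nonneg_right (sum_nonneg fun i _ => abs_nonneg _)
  have hrest : ∑ i ∈ (S ∪ T)ᶜ, |v i - w i| ≤ ∑ i ∈ Tᶜ, |v i - b i| := calc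
    ∑ i ∈ (S ∪ T)ᶜ, |v i - w i| = ∑ i ∈ (S ∪ T)ᶜ, |v i - b i| :=
      sum_congr rfl fun i hi => by rw [hwb i fun hiS => mem_compl.mp hi (mem_union_left T hiS)]
    _ ≤ ∑ i ∈ Tᶜ, |v i - b i| :=
      sum_le_sum_of_subset_of_nonneg (compl_subset_compl.mpr subset_union_right)
        fun i _ _ => abs_nonneg _
  have hbound : ∑ i, |v i - w i| ≤
      ∑ i ∈ S, |v i - w i| + ∑ i ∈ T, |v i - w i| + ∑ i ∈ Tᶜ, |v i - b i| := by
    linarith [sum_add_sum_compl (S ∪ T) fun i => |v i - w i|]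
  linarith [mul_le_mul_of_nonneg_left hbound (by linarith : (0 : ℝ) ≤ 1 + ψ)]

end RangeProperty

lemma le_sigmaL {m L : ℕ} (hL : L ≤ m) {c : ℝ} {v : Fin m → ℝ}
    (h : ∀ T : Finset (Fin m), T.card = L → c ≤ ∑ i ∈ Tᶜ, |v i|) :
    c ≤ sigmaL L v := by
  obtain ⟨T₀, -, hT₀⟩ := exists_subset_card_eq (s := (univ : Finset (Fin m))) (n := L)
    (by simpa using hL)
  have : Nonempty {T : Finset (Fin m) // T.card = L} := ⟨⟨T₀, hT₀⟩⟩
  exact le_ciInf fun T => h T T.2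

theorem stmt_3_general (m n : ℕ)
    (A : Fin m → Fin n → ℝ) (b : Fin m → ℝ)
    (L : ℕ) (hLm : L < m)
    (ψ : ℝ) (hψ0 : 0 < ψ) (hψ1 : ψ < 1)
    (hARP : ∀ (x y : Fin n → ℝ) (T : Finset (Fin m)), T.card ≤ L →
      ∑ i ∈ T, |abs (∑ j, A i j * x j) - abs (∑ j, A i j * y j)| ≤
        ψ * ∑ i ∈ Tᶜ, |abs (∑ j, A i j * x j) - abs (∑ j, A i j * y j)|)
    (xs : Fin n → ℝ)
    (hsparse : (univ.filter fun i => abs (∑ j, A i j * xs j) - b i ≠ 0).card ≤ L) :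
    (∀ x : Fin n → ℝ,
        ∑ i, |abs (∑ j, A i j * x j) - b i| ≥ ∑ i, |abs (∑ j, A i j * xs j) - b i|) ∧
    (∀ x : Fin n → ℝ,
        ∑ i, |abs (∑ j, A i j * x j) - abs (∑ j, A i j * xs j)| ≤
          (2 * (1 + ψ) / (1 - ψ)) * sigmaL L (fun i => abs (∑ j, A i j * x j) - b i)) ∧
    (∀ xt : Fin n → ℝ,
        (∀ x : Fin n → ℝ,
          ∑ i, |abs (∑ j, A i j * xt j) - b i| ≤ ∑ i, |abs (∑ j, A i j * x j) - b i|) →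
        ∀ i, |∑ j, A i j * xt j| = |∑ j, A i j * xs j|) := by
  set u : (Fin n → ℝ) → Fin m → ℝ := fun x i => |∑ j, A i j * x j|
  set S := univ.filter fun i => u xs i - b i ≠ 0
  have hwb : ∀ i ∉ S, u xs i = b i := fun i hi => by simpa [S, sub_eq_zero] using hi
  refine ⟨fun x => sum_abs_sub_le_sum_abs_sub (by linarith) hψ1.le hwb (hARP x xs S hsparse),
    fun x => ?_, fun xt hmin i => ?_⟩
  · have hT : ∀ T : Finset (Fin m), T.card = L →
        (1 - ψ) * (∑ i, |u x i - u xs i|) / (1 + ψ) ≤ ∑ i ∈ Tᶜ, |u x i - b i| := fun T hT => by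
      rw [div_le_iff₀ (by linarith), mul_comm _ (1 + ψ)]
      exact one_sub_mul_sum_abs_sub_le_sum_compl (by linarith) hwb (hARP x xs S hsparse)
        (hARP x xs T hT.le)
    have hσ := le_sigmaL hLm.le hT
    rw [div_le_iff₀ (by linarith)] at hσ
    have hN : 0 ≤ ∑ i, |u x i - u xs i| := sum_nonneg fun i _ => abs_nonneg _
    rw [div_mul_eq_mul_div, le_div_iff₀ (by linarith)]
    nlinarith
  · have := eq_of_sum_abs_sub_le (by linarith) hψ1 hwb (hARP xt xs S hsparse) (hmin xs)
    exact congrFun this i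

theorem stmt_3 (m n : ℕ) (hm : 0 < m) (hn : 0 < n)
    (A : Fin m → Fin n → ℝ) (b : Fin m → ℝ)
    (L : ℕ) (hL0 : 0 < L) (hLm : L < m)
    (ψ : ℝ) (hψ0 : 0 < ψ) (hψ1 : ψ < 1)
    (hARP : ∀ (x y : Fin n → ℝ) (T : Finset (Fin m)), T.card ≤ L →
      ∑ i ∈ T, |abs (∑ j, A i j * x j) - abs (∑ j, A i j * y j)| ≤
        ψ * ∑ i ∈ Tᶜ, |abs (∑ j, A i j * x j) - abs (∑ j, A i j * y j)|)
    (xs : Fin n → ℝ)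
    (hsparse : (univ.filter fun i => abs (∑ j, A i j * xs j) - b i ≠ 0).card ≤ L) :
    (∀ x : Fin n → ℝ,
        ∑ i, |abs (∑ j, A i j * x j) - b i| ≥ ∑ i, |abs (∑ j, A i j * xs j) - b i|) ∧
    (∀ x : Fin n → ℝ,
        ∑ i, |abs (∑ j, A i j * x j) - abs (∑ j, A i j * xs j)| ≤
          (2 * (1 + ψ) / (1 - ψ)) * sigmaL L (fun i => abs (∑ j, A i j * x j) - b i)) ∧
    (∀ xt : Fin n → ℝ,
        (∀ x : Fin n → ℝ,
          ∑ i, |abs (∑ j, A i j * xt j) - b i| ≤ ∑ i, |abs (∑ j, A i j * x j) - b i|) →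
        ∀ i, |∑ j, A i j * xt j| = |∑ j, A i j * xs j|) :=
  stmt_3_general m n A b L hLm ψ hψ0 hψ1 hARP xs hsparse
end

section
/- Let x, y ∈ ℝ^n with ⟨x, y⟩ ≥ 0. Then ‖x + y‖ + (√2 − 1)·‖x − y‖ ≥ ‖x‖ + ‖y‖. -/
/-! Put `a = ‖x + y‖` and `b = ‖x - y‖`; then `0 ≤ ⟪x, y⟫` means `b ≤ a`. By the parallelogram law
`(‖x‖ + ‖y‖)² ≤ 2 (‖x‖² + ‖y‖²) = a² + b²`, and for `0 ≤ b ≤ a` one has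
`a² + b² ≤ (a + (√2 - 1) b)²`, the difference being `2 (√2 - 1) b (a - b)`. -/

open Real RealInnerProductSpace

lemma sq_add_sq_le_sq_add_sqrt_two_sub_one_mul {a b : ℝ} (hb : 0 ≤ b) (hba : b ≤ a) :
    a ^ 2 + b ^ 2 ≤ (a + (√2 - 1) * b) ^ 2 := by
  have hs : √2 ^ 2 = 2 := sq_sqrt zero_le_two
  nlinarith [mul_nonneg (mul_nonneg hb (sub_nonneg.2 hba)) (sub_nonneg.2 one_lt_sqrt_two.le)]

section InnerProductSpace

variable {E : Type*} [NormedAddCommGroup E] [InnerProductSpace ℝ E]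

lemma norm_sub_le_norm_add_of_inner_nonneg {x y : E} (h : 0 ≤ ⟪x, y⟫) : ‖x - y‖ ≤ ‖x + y‖ := by
  refine le_of_sq_le_sq ?_ (norm_nonneg _)
  rw [norm_sub_sq_real, norm_add_sq_real]
  linarith

lemma sq_norm_add_norm_le_sq_norm_add_add_sq_norm_sub (x y : E) :
    (‖x‖ + ‖y‖) ^ 2 ≤ ‖x + y‖ ^ 2 + ‖x - y‖ ^ 2 := by
  nlinarith [parallelogram_law_with_norm ℝ x y, sq_nonneg (‖x‖ - ‖y‖)]

theorem norm_add_norm_le_norm_add_add_sqrt_two_sub_one_mul_norm_sub {x y : E} (h : 0 ≤ ⟪x, y⟫) :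
    ‖x‖ + ‖y‖ ≤ ‖x + y‖ + (√2 - 1) * ‖x - y‖ := by
  have hba := norm_sub_le_norm_add_of_inner_nonneg h
  have hb : 0 ≤ ‖x - y‖ := norm_nonneg _
  refine le_of_sq_le_sq ?_
    (add_nonneg (norm_nonneg _) (mul_nonneg (sub_nonneg.2 one_lt_sqrt_two.le) hb))
  calc (‖x‖ + ‖y‖) ^ 2 ≤ ‖x + y‖ ^ 2 + ‖x - y‖ ^ 2 :=
        sq_norm_add_norm_le_sq_norm_add_add_sq_norm_sub x y
    _ ≤ (‖x + y‖ + (√2 - 1) * ‖x - y‖) ^ 2 := sq_add_sq_le_sq_add_sqrt_two_sub_one_mul hb hba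

end InnerProductSpace

theorem stmt_7 (n : ℕ) (x y : EuclideanSpace ℝ (Fin n))
    (hxy : (0:ℝ) ≤ ∑ i, x i * y i) :
    ‖x + y‖ + (Real.sqrt 2 - 1) * ‖x - y‖ ≥ ‖x‖ + ‖y‖ := by
  refine norm_add_norm_le_norm_add_add_sqrt_two_sub_one_mul_norm_sub ?_
  simpa [PiLp.inner_apply, mul_comm] using hxy
end

section
/- For all x, y ∈ ℝ^n, √2·‖x xᵀ − y yᵀ‖_F ≥ ‖x + y‖·‖x − y‖. -/
/-- Frobenius norm of the rank-two matrix `x xᵀ - y yᵀ`. -/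
noncomputable def frobXY {n : ℕ} (x y : Fin n → ℝ) : ℝ :=
  Real.sqrt (∑ i, ∑ j, (x i * x j - y i * y j) ^ 2)

theorem stmt_8 (n : ℕ) (x y : EuclideanSpace ℝ (Fin n)) :
    Real.sqrt 2 * frobXY (fun i => x i) (fun i => y i) ≥ ‖x + y‖ * ‖x - y‖ := by
  set a : ℝ := ∑ i, x i ^ 2 with ha
  set b : ℝ := ∑ i, y i ^ 2 with hb
  set t : ℝ := ∑ i, x i * y i with ht
  have hS : (∑ i, ∑ j, (x i * x j - y i * y j) ^ 2) = a ^ 2 + b ^ 2 - 2 * t ^ 2 := by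
    have h : ∀ i j : Fin n, (x i * x j - y i * y j) ^ 2
        = x i ^ 2 * x j ^ 2 - 2 * ((x i * y i) * (x j * y j)) + y i ^ 2 * y j ^ 2 := by
      intro i j; ring
    simp_rw [h, Finset.sum_add_distrib, Finset.sum_sub_distrib, ← Finset.mul_sum,
      ← Finset.sum_mul, ← ha, ← hb]
    rw [← ht]
    ring
  have hP2 : ‖x + y‖ ^ 2 = a + b + 2 * t := by
    rw [EuclideanSpace.norm_eq, Real.sq_sqrt (by positivity)]
    simp only [PiLp.add_apply, Real.norm_eq_abs, sq_abs, ha, hb, ht]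
    rw [Finset.mul_sum, ← Finset.sum_add_distrib, ← Finset.sum_add_distrib]
    exact Finset.sum_congr rfl (fun i _ => by ring)
  have hQ2 : ‖x - y‖ ^ 2 = a + b - 2 * t := by
    rw [EuclideanSpace.norm_eq, Real.sq_sqrt (by positivity)]
    simp only [PiLp.sub_apply, Real.norm_eq_abs, sq_abs, ha, hb, ht]
    rw [Finset.mul_sum, ← Finset.sum_add_distrib, ← Finset.sum_sub_distrib]
    exact Finset.sum_congr rfl (fun i _ => by ring)
  have hle : (‖x + y‖ * ‖x - y‖) ^ 2 ≤ 2 * (a ^ 2 + b ^ 2 - 2 * t ^ 2) := by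
    rw [mul_pow, hP2, hQ2]
    nlinarith [sq_nonneg (a - b), sq_nonneg t]
  rw [ge_iff_le, frobXY, hS, ← Real.sqrt_mul (by norm_num : (0:ℝ) ≤ 2)]
  calc ‖x + y‖ * ‖x - y‖ = Real.sqrt ((‖x + y‖ * ‖x - y‖) ^ 2) := by
        rw [Real.sqrt_sq (by positivity)]
    _ ≤ Real.sqrt (2 * (a ^ 2 + b ^ 2 - 2 * t ^ 2)) := Real.sqrt_le_sqrt hle
end

section
/- For all real numbers t ∈ [0,1] and ρ ∈ [0,1], √(t² − 2ρt + 1) + √(t² + 2ρt + 1) − 1 − t ≥ (2 − √2)·√(t² − 2ρt + 1). -/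
theorem stmt_13 (t ρ : ℝ) (ht : t ∈ Set.Icc (0:ℝ) 1) (hρ : ρ ∈ Set.Icc (0:ℝ) 1) :
    Real.sqrt (t ^ 2 - 2 * ρ * t + 1) + Real.sqrt (t ^ 2 + 2 * ρ * t + 1) - 1 - t ≥
      (2 - Real.sqrt 2) * Real.sqrt (t ^ 2 - 2 * ρ * t + 1) := by
  obtain ⟨ht0, ht1⟩ := ht
  obtain ⟨hρ0, hρ1⟩ := hρ
  have hA : (0:ℝ) ≤ t ^ 2 - 2 * ρ * t + 1 := by nlinarith [sq_nonneg (1 - t)]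
  have hB : (0:ℝ) ≤ t ^ 2 + 2 * ρ * t + 1 := by nlinarith
  set a := Real.sqrt (t ^ 2 - 2 * ρ * t + 1) with hadef
  set b := Real.sqrt (t ^ 2 + 2 * ρ * t + 1) with hbdef
  have ha0 : 0 ≤ a := Real.sqrt_nonneg _
  have hb0 : 0 ≤ b := Real.sqrt_nonneg _
  have ha2 : a ^ 2 = t ^ 2 - 2 * ρ * t + 1 := Real.sq_sqrt hA
  have hb2 : b ^ 2 = t ^ 2 + 2 * ρ * t + 1 := Real.sq_sqrt hB
  have hab : a ≤ b := Real.sqrt_le_sqrt (by nlinarith)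
  have hs0 : 0 ≤ Real.sqrt 2 := Real.sqrt_nonneg 2
  have hs2 : Real.sqrt 2 ^ 2 = 2 := Real.sq_sqrt (by norm_num)
  have hs1 : 1 ≤ Real.sqrt 2 := by nlinarith
  have hcab : 0 ≤ (Real.sqrt 2 - 1) * (a * (b - a)) :=
    mul_nonneg (by linarith) (mul_nonneg ha0 (by linarith))
  have key : ((Real.sqrt 2 - 1) * a + b) ^ 2 ≥ (1 + t) ^ 2 := by
    nlinarith [sq_nonneg (1 - t)]
  have hble : 1 + t ≤ (Real.sqrt 2 - 1) * a + b :=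
    (pow_le_pow_iff_left₀ (by linarith) (by nlinarith) two_ne_zero).mp key
  linarith
end

section
/- Let A ∈ ℝ^{m×n} have rows a_1,…,a_m and let ε > 0. Suppose that for every h ∈ ℝ^n, (1−ε)·√(2/π)·‖h‖ ≤ (1/m)·Σ_{i=1}^m |⟨a_i,h⟩| ≤ (1+ε)·√(2/π)·‖h‖. Then for all x, y ∈ ℝ^n with ‖x − y‖ ≤ ‖x + y‖ ≤ 10·‖x − y‖, (1/m)·Σ_{i=1}^m | |⟨a_i,x⟩| − |⟨a_i,y⟩| | ≥ √(2/π)·(2 − √2 − (√2 + 20)·ε)·‖x − y‖. -/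
/-!
Pointwise `|p| + |q| + ||p| - |q|| = |p + q| + |p - q|`, so with `S h = (1/m) ∑ |⟨aᵢ, h⟩|` the
growth sum equals `S (x + y) + S (x - y) - S x - S y`. The two-sided concentration bounds make this
at least `√(2/π) ((1 - ε)(‖x + y‖ + ‖x - y‖) - (1 + ε)(‖x‖ + ‖y‖))`. By the parallelogram law and
`‖x - y‖ ≤ ‖x + y‖`, `‖x‖ + ‖y‖ ≤ ‖x + y‖ + (√2 - 1)‖x - y‖`, which yields the main term
`(2 - √2)‖x - y‖`; the `ε`-terms are absorbed using `‖x + y‖ ≤ 10 ‖x - y‖`.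
-/

open Finset Real
open scoped RealInnerProductSpace

/-- Both sides equal `2 * max |p| |q|`. -/
theorem abs_add_abs_add_abs_abs_sub_abs (p q : ℝ) :
    |p| + |q| + |(|p| - |q|)| = |p + q| + |p - q| := by
  grind [abs_cases]

theorem Finset.sum_abs_abs_sub_abs {ι : Type*} (s : Finset ι) (p q : ι → ℝ) :
    ∑ i ∈ s, |(|p i| - |q i|)| =
      ∑ i ∈ s, |p i + q i| + ∑ i ∈ s, |p i - q i| - ∑ i ∈ s, |p i| - ∑ i ∈ s, |q i| := by
  simp only [← sum_add_distrib, ← sum_sub_distrib]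
  exact sum_congr rfl fun i _ ↦ by linarith [abs_add_abs_add_abs_abs_sub_abs (p i) (q i)]

variable {E : Type*} [NormedAddCommGroup E] [InnerProductSpace ℝ E]

theorem norm_add_norm_le_of_norm_sub_le_norm_add {x y : E} (h : ‖x - y‖ ≤ ‖x + y‖) :
    ‖x‖ + ‖y‖ ≤ ‖x + y‖ + (√2 - 1) * ‖x - y‖ := by
  have hsq : √2 ^ 2 = 2 := sq_sqrt zero_le_two
  have hone : 1 ≤ √2 := one_le_sqrt.2 one_le_two
  have hpar : ‖x + y‖ ^ 2 + ‖x - y‖ ^ 2 = 2 * (‖x‖ ^ 2 + ‖y‖ ^ 2) := by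
    simpa only [sq] using parallelogram_law_with_norm ℝ x y
  refine (pow_le_pow_iff_left₀ (by positivity) (by nlinarith [norm_nonneg (x - y)]) two_ne_zero).1 ?_
  calc (‖x‖ + ‖y‖) ^ 2 ≤ 2 * (‖x‖ ^ 2 + ‖y‖ ^ 2) := add_sq_le
    _ = ‖x + y‖ ^ 2 + ‖x - y‖ ^ 2 := hpar.symm
    _ ≤ (‖x + y‖ + (√2 - 1) * ‖x - y‖) ^ 2 := by
      -- the difference is `2 (√2 - 1) ‖x - y‖ (‖x + y‖ - ‖x - y‖)`
      nlinarith [mul_nonneg (mul_nonneg (norm_nonneg (x - y)) (sub_nonneg.2 h)) (sub_nonneg.2 hone)]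

theorem le_sum_abs_abs_inner_sub_abs_inner {ι : Type*} [Fintype ι] (a : ι → E) (w c ε K : ℝ)
    (hc : 0 ≤ c) (hε : 0 ≤ ε)
    (hconc : ∀ h : E, (1 - ε) * c * ‖h‖ ≤ w * ∑ i, |⟪a i, h⟫| ∧
      w * ∑ i, |⟪a i, h⟫| ≤ (1 + ε) * c * ‖h‖)
    {x y : E} (hsub : ‖x - y‖ ≤ ‖x + y‖) (hadd : ‖x + y‖ ≤ K * ‖x - y‖) :
    c * (2 - √2 - (√2 + 2 * K) * ε) * ‖x - y‖ ≤ w * ∑ i, |(|⟪a i, x⟫| - |⟪a i, y⟫|)| := by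
  have hnorm := norm_add_norm_le_of_norm_sub_le_norm_add hsub
  have hmargin : (2 - √2 - (√2 + 2 * K) * ε) * ‖x - y‖ ≤
      (1 - ε) * (‖x + y‖ + ‖x - y‖) - (1 + ε) * (‖x‖ + ‖y‖) := by
    have hsum : ‖x + y‖ + ‖x - y‖ + (‖x‖ + ‖y‖) ≤ (√2 + 2 * K) * ‖x - y‖ := by linarith
    nlinarith [mul_le_mul_of_nonneg_left hsum hε]
  rw [sum_abs_abs_sub_abs]
  simp only [← inner_add_right, ← inner_sub_right]
  calc c * (2 - √2 - (√2 + 2 * K) * ε) * ‖x - y‖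
      ≤ c * ((1 - ε) * (‖x + y‖ + ‖x - y‖) - (1 + ε) * (‖x‖ + ‖y‖)) := by
        rw [mul_assoc]; exact mul_le_mul_of_nonneg_left hmargin hc
    _ ≤ _ := by
      linarith [(hconc (x + y)).1, (hconc (x - y)).1, (hconc x).2, (hconc y).2]

theorem stmt_14 (m n : ℕ) (A : Fin m → Fin n → ℝ) (ε : ℝ) (hε : 0 < ε)
    (hconc : ∀ h : EuclideanSpace ℝ (Fin n),
      (1 - ε) * Real.sqrt (2 / Real.pi) * ‖h‖ ≤ (1 / m) * ∑ i, |∑ j, A i j * h j| ∧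
      (1 / m) * ∑ i, |∑ j, A i j * h j| ≤ (1 + ε) * Real.sqrt (2 / Real.pi) * ‖h‖) :
    ∀ x y : EuclideanSpace ℝ (Fin n),
      ‖x - y‖ ≤ ‖x + y‖ → ‖x + y‖ ≤ 10 * ‖x - y‖ →
      (1 / m) * ∑ i, |abs (∑ j, A i j * x j) - abs (∑ j, A i j * y j)| ≥
        Real.sqrt (2 / Real.pi) * (2 - Real.sqrt 2 - (Real.sqrt 2 + 20) * ε) * ‖x - y‖ := by
  intro x y hsub hadd
  have hrow : ∀ i (h : EuclideanSpace ℝ (Fin n)), ⟪WithLp.toLp 2 (A i), h⟫ = ∑ j, A i j * h j :=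
    fun i h ↦ by simp [EuclideanSpace.inner_eq_star_dotProduct, dotProduct, mul_comm]
  have key := le_sum_abs_abs_inner_sub_abs_inner (fun i ↦ WithLp.toLp 2 (A i)) _ _ ε 10
    (sqrt_nonneg _) hε.le (by simpa only [hrow] using hconc) hsub hadd
  simpa only [hrow, ge_iff_le, show (2 : ℝ) * 10 = 20 by norm_num] using key
end

section
/- Let A ∈ ℝ^{m×n} have rows a_1,…,a_m and let ε ∈ (0, 0.01). Suppose that (a) for every h ∈ ℝ^n, (1−ε)·√(2/π)·‖h‖ ≤ (1/m)·Σ_{i=1}^m |⟨a_i,h⟩| ≤ (1+ε)·√(2/π)·‖h‖, and (b) for all x, y ∈ ℝ^n, (1/m)·Σ_{i=1}^m | |⟨a_i,x⟩|² − |⟨a_i,y⟩|² |^{1/2} ≥ 0.77·(1−ε)·‖x xᵀ − y yᵀ‖_F^{1/2}. Then for all x, y ∈ ℝ^n with ‖x + y‖ ≥ 10·‖x − y‖, (1/m)·Σ_{i=1}^m | |⟨a_i,x⟩| − |⟨a_i,y⟩| | ≥ (5·0.77²·√π·(1−ε)² / ((√2 + 9)·(1+ε)))·‖x − y‖ ≥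 √(2/π)·(2 − √2)·‖x − y‖. -/
set_option maxHeartbeats 1000000

lemma abs_add_abs_id (b c : ℝ) : |b| + |c| = |b+c| + |b-c| - |(|b|-|c|)| := by
  rcases abs_cases b with ⟨hb,hb'⟩|⟨hb,hb'⟩ <;>
  rcases abs_cases c with ⟨hc,hc'⟩|⟨hc,hc'⟩ <;>
  rcases abs_cases (b+c) with ⟨h1,h1'⟩|⟨h1,h1'⟩ <;>
  rcases abs_cases (b-c) with ⟨h2,h2'⟩|⟨h2,h2'⟩ <;>
  rcases abs_cases (|b|-|c|) with ⟨h3,h3'⟩|⟨h3,h3'⟩ <;>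
  rw [hb, hc] at h3 h3' ⊢ <;> linarith

lemma abs_sq_sub_sq (b c : ℝ) : |b^2 - c^2| = |(|b|-|c|)| * (|b|+|c|) := by
  have h : b^2 - c^2 = (|b|-|c|) * (|b|+|c|) := by
    nlinarith [abs_mul_abs_self b, abs_mul_abs_self c]
  rw [h, abs_mul, abs_of_nonneg (by positivity : (0:ℝ) ≤ |b|+|c|)]

lemma frob_expand {n : ℕ} (x y : Fin n → ℝ) :
    ∑ i, ∑ j, (x i * x j - y i * y j) ^ 2
      = (∑ i, x i^2)^2 + (∑ i, y i^2)^2 - 2*(∑ i, x i * y i)^2 := by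
  have hx := Finset.sum_mul_sum Finset.univ Finset.univ (fun i => x i^2) (fun j => x j^2)
  have hy := Finset.sum_mul_sum Finset.univ Finset.univ (fun i => y i^2) (fun j => y j^2)
  have hxy := Finset.sum_mul_sum Finset.univ Finset.univ (fun i => x i * y i) (fun j => x j * y j)
  have h : ∀ i : Fin n, ∑ j, (x i * x j - y i * y j) ^ 2
      = ∑ j, (x i^2 * x j^2) - 2 * ∑ j, ((x i * y i) * (x j * y j)) + ∑ j, (y i^2 * y j^2) := by
    intro i
    rw [Finset.mul_sum, ← Finset.sum_sub_distrib, ← Finset.sum_add_distrib]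
    exact Finset.sum_congr rfl fun j _ => by ring
  rw [Finset.sum_congr rfl fun i _ => h i, Finset.sum_add_distrib, Finset.sum_sub_distrib,
    ← Finset.mul_sum, sq, sq, sq, hx, hy, hxy]
  ring

lemma sum_add_sq {n : ℕ} (x y : Fin n → ℝ) :
    ∑ i, (x i + y i)^2 = (∑ i, x i^2) + 2*(∑ i, x i * y i) + (∑ i, y i^2) := by
  rw [Finset.mul_sum, ← Finset.sum_add_distrib, ← Finset.sum_add_distrib]
  exact Finset.sum_congr rfl fun j _ => by ring

lemma sum_sub_sq {n : ℕ} (x y : Fin n → ℝ) :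
    ∑ i, (x i - y i)^2 = (∑ i, x i^2) - 2*(∑ i, x i * y i) + (∑ i, y i^2) := by
  rw [Finset.mul_sum, ← Finset.sum_sub_distrib, ← Finset.sum_add_distrib]
  exact Finset.sum_congr rfl fun j _ => by ring

lemma frob_ge {n : ℕ} (x y : Fin n → ℝ) :
    Real.sqrt (∑ i, (x i + y i)^2) * Real.sqrt (∑ i, (x i - y i)^2)
      ≤ Real.sqrt 2 * frobXY x y := by
  rw [frobXY, ← Real.sqrt_mul (by positivity), ← Real.sqrt_mul (by norm_num)]
  apply Real.sqrt_le_sqrt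
  rw [frob_expand, sum_add_sq, sum_sub_sq]
  nlinarith [sq_nonneg ((∑ i, x i^2) - (∑ i, y i^2))]

lemma q_bounds (q : ℝ) (hq0 : 0 < q) (hq2 : q^2 = 2) : 1.4142 ≤ q ∧ q ≤ 1.4143 := by
  constructor <;> nlinarith

lemma bracket_nonneg (q ε : ℝ) (hq2 : q^2 = 2) (hq : 1.4142 ≤ q) (hq' : q ≤ 1.4143)
    (hε : 0 < ε) (hε' : ε < 0.01) :
    0 ≤ 10*(7*q-16)*(1+ε)^2 + 25*0.77^2*Real.pi*(1-ε)^2*q := by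
  have hπ := Real.pi_gt_d6
  have hA : (0.9801:ℝ) ≤ (1-ε)^2 := by nlinarith
  have hB : (1+ε)^2 ≤ 1.0201 := by nlinarith
  have hC : (3.141592:ℝ)*1.4142 ≤ Real.pi * q := by nlinarith
  have hD : (3.141592:ℝ)*1.4142*0.9801 ≤ Real.pi * q * ((1-ε)^2) := by nlinarith
  nlinarith [hD, hB]

lemma keyA_poly (q ε s d : ℝ) (hq2 : q^2 = 2) (hq : 1.4142 ≤ q) (hq' : q ≤ 1.4143)
    (hd : 0 ≤ d) (hs : 10*d ≤ s) (hε : 0 < ε) (hε' : ε < 0.01) :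
    10*(s+d)*(q+9)*(1+ε)^2 ≤ s*(q+9)^2*(1+ε)^2 + 25*0.77^2*Real.pi*(1-ε)^2*q*d := by
  have h1 := bracket_nonneg q ε hq2 hq hq' hε hε'
  have h2 : 0 ≤ (s - 10*d) * ((q+9)*(q-1)*(1+ε)^2) := by
    apply mul_nonneg (by linarith)
    apply mul_nonneg (mul_nonneg (by linarith) (by linarith)) (sq_nonneg _)
  have h3 : (q^2 - 2)*(d*(1+ε)^2) = 0 := by rw [hq2]; ring
  nlinarith [mul_nonneg hd h1, h2, h3]

lemma keyA_div (p q ε s d : ℝ) (hp : 0 < p) (hp2 : p^2 = Real.pi)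
    (hq0 : 0 < q) (hq2 : q^2 = 2) (hd : 0 ≤ d) (hs : 10*d ≤ s)
    (hε : 0 < ε) (hε' : ε < 0.01) :
    (5*0.77^2*p*(1-ε)^2/((q+9)*(1+ε))) *
        ((1+ε)*(q/p)*(s+d) - (5*0.77^2*p*(1-ε)^2/((q+9)*(1+ε)))*d)
      ≤ 0.77^2*(1-ε)^2*s/q := by
  obtain ⟨hq, hq'⟩ := q_bounds q hq0 hq2
  have key := keyA_poly q ε s d hq2 hq hq' hd hs hε hε'
  have hε2 : (0:ℝ) < 1+ε := by linarith
  have hq9 : (0:ℝ) < q+9 := by linarith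
  have hnum : 0 ≤ 0.77^2*(1-ε)^2*s*(q+9)^2*(1+ε)^2 + 25*0.77^4*(1-ε)^4*(p^2)*q*d
      - 5*0.77^2*(1-ε)^2*(q^2)*(s+d)*(q+9)*(1+ε)^2 := by
    rw [hp2, hq2]
    nlinarith [mul_le_mul_of_nonneg_left key
      (show (0:ℝ) ≤ 0.77^2*(1-ε)^2 by positivity)]
  rw [← sub_nonneg]
  have hrep : 0.77^2*(1-ε)^2*s/q -
      (5*0.77^2*p*(1-ε)^2/((q+9)*(1+ε))) *
        ((1+ε)*(q/p)*(s+d) - (5*0.77^2*p*(1-ε)^2/((q+9)*(1+ε)))*d)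
      = (0.77^2*(1-ε)^2*s*(q+9)^2*(1+ε)^2 + 25*0.77^4*(1-ε)^4*(p^2)*q*d
        - 5*0.77^2*(1-ε)^2*(q^2)*(s+d)*(q+9)*(1+ε)^2) / (q*(q+9)^2*(1+ε)^2) := by
    field_simp
    ring
  rw [hrep]
  positivity

lemma keyB_div (p q ε s d : ℝ) (hp : 0 < p) (hp2 : p^2 = Real.pi)
    (hq0 : 0 < q) (hq2 : q^2 = 2) (hq : 1.4142 ≤ q) (hq' : q ≤ 1.4143)
    (hd : 0 ≤ d) (hs : 10*d ≤ s) (hε : 0 < ε) (hε' : ε < 0.01) :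
    (5*0.77^2*p*(1-ε)^2/((q+9)*(1+ε))) * d ≤ (1-ε)*(q/p)*s/2 := by
  have hε2 : (0:ℝ) < 1+ε := by linarith
  have hq9 : (0:ℝ) < q+9 := by linarith
  have hs0 : (0:ℝ) ≤ s := by linarith
  have hπ' := Real.pi_lt_d2
  have he : (0.99:ℝ) ≤ (1-ε)*(1+ε) := by nlinarith
  have hqq : (14.72:ℝ) ≤ q*(q+9) := by nlinarith
  have h1 : (14:ℝ) ≤ (1-ε)*q*(q+9)*(1+ε) := by
    nlinarith [mul_le_mul he hqq (by norm_num) (by nlinarith : (0:ℝ) ≤ (1-ε)*(1+ε))]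
  have hpoly : 10*0.77^2*Real.pi*(1-ε)^2*d ≤ (1-ε)*q*s*(q+9)*(1+ε) := by
    have h2 := mul_le_mul_of_nonneg_right h1 hs0
    have h3 : (1-ε)^2 ≤ 1 := by nlinarith
    nlinarith [h2, mul_le_mul_of_nonneg_right h3 hd]
  rw [← sub_nonneg]
  have hrep : (1-ε)*(q/p)*s/2 - (5*0.77^2*p*(1-ε)^2/((q+9)*(1+ε))) * d
      = ((1-ε)*q*s*(q+9)*(1+ε) - 10*0.77^2*(p^2)*(1-ε)^2*d) / (2*p*(q+9)*(1+ε)) := by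
    field_simp
    ring
  rw [hrep]
  apply div_nonneg _ (by positivity)
  rw [hp2]
  linarith

lemma keyC_poly (q ε : ℝ) (hq2 : q^2 = 2) (hq : 1.4142 ≤ q) (hq' : q ≤ 1.4143)
    (hε : 0 < ε) (hε' : ε < 0.01) :
    q*(2-q)*(q+9)*(1+ε) ≤ 5*0.77^2*Real.pi*(1-ε)^2 := by
  have hπ := Real.pi_gt_d6
  have hA : (0.9801:ℝ) ≤ (1-ε)^2 := by nlinarith
  have h3 : (q^2-2)*((q+7)*(1+ε)) = 0 := by rw [hq2]; ring
  nlinarith [hA, hπ, h3]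

lemma keyC_div (p q ε : ℝ) (hp : 0 < p) (hp2 : p^2 = Real.pi)
    (hq0 : 0 < q) (hq2 : q^2 = 2) (hε : 0 < ε) (hε' : ε < 0.01) :
    (q/p)*(2-q) ≤ 5*0.77^2*p*(1-ε)^2/((q+9)*(1+ε)) := by
  obtain ⟨hq, hq'⟩ := q_bounds q hq0 hq2
  have hε2 : (0:ℝ) < 1+ε := by linarith
  have hq9 : (0:ℝ) < q+9 := by linarith
  have key := keyC_poly q ε hq2 hq hq' hε hε'
  rw [← sub_nonneg]
  have hrep : 5*0.77^2*p*(1-ε)^2/((q+9)*(1+ε)) - (q/p)*(2-q)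
      = (5*0.77^2*(p^2)*(1-ε)^2 - q*(2-q)*(q+9)*(1+ε)) / (p*(q+9)*(1+ε)) := by
    field_simp
  rw [hrep]
  apply div_nonneg _ (by positivity)
  rw [hp2]
  linarith

lemma main_ineq (m : ℕ) (hm : 0 < (m:ℝ)) (b c : Fin m → ℝ) (p q ε s d F : ℝ)
    (hp : 0 < p) (hp2 : p^2 = Real.pi) (hq0 : 0 < q) (hq2 : q^2 = 2)
    (hε : 0 < ε) (hε' : ε < 0.01) (hd : 0 < d) (hs : 10*d ≤ s)
    (hSB_ub : ∑ i, |b i + c i| ≤ ((1+ε)*(q/p)*s)*m)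
    (hSB_lb : ((1-ε)*(q/p)*s)*m ≤ ∑ i, |b i + c i|)
    (hSG_ub : ∑ i, |b i - c i| ≤ ((1+ε)*(q/p)*d)*m)
    (hS_lb : (0.77*(1-ε)*Real.sqrt F)*m ≤ ∑ i, Real.sqrt |b i^2 - c i^2|)
    (hFnn : 0 ≤ F) (hF : s*d ≤ q*F) :
    (5*0.77^2*p*(1-ε)^2/((q+9)*(1+ε)))*d*m ≤ ∑ i, |(|b i| - |c i|)| := by
  obtain ⟨hq, hq'⟩ := q_bounds q hq0 hq2
  set K : ℝ := 5*0.77^2*p*(1-ε)^2/((q+9)*(1+ε)) with hK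
  set T : ℝ := ∑ i, |(|b i| - |c i|)| with hT
  set SB : ℝ := ∑ i, |b i + c i| with hSB
  set SG : ℝ := ∑ i, |b i - c i| with hSGdef
  set S : ℝ := ∑ i, Real.sqrt |b i^2 - c i^2| with hSdef
  have hε1 : (0:ℝ) < 1 - ε := by linarith
  have hKpos : 0 < K := by
    apply div_pos
    · positivity
    · positivity
  have hTnn : 0 ≤ T := Finset.sum_nonneg fun i _ => abs_nonneg _
  have hSGnn : 0 ≤ SG := Finset.sum_nonneg fun i _ => abs_nonneg _
  have hCS : S^2 ≤ T * (∑ i, (|b i| + |c i|)) := by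
    apply Finset.sum_sq_le_sum_mul_sum_of_sq_eq_mul
    · intro i _; positivity
    · intro i _; positivity
    · intro i _; rw [Real.sq_sqrt (abs_nonneg _), abs_sq_sub_sq]
  have hV : ∑ i, (|b i| + |c i|) = SB + SG - T := by
    rw [hSB, hSGdef, hT, ← Finset.sum_add_distrib, ← Finset.sum_sub_distrib]
    exact Finset.sum_congr rfl fun i _ => abs_add_abs_id _ _
  rw [hV] at hCS
  by_contra hcon
  push_neg at hcon
  have hB := keyB_div p q ε s d hp hp2 hq0 hq2 hq hq' hd.le hs hε hε'
  rw [← hK] at hB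
  have hhalf : K*d*m ≤ (SB + SG)/2 := by
    have h1 := mul_le_mul_of_nonneg_right hB hm.le
    linarith [hSB_lb, hSGnn, h1]
  have hgap : 0 < (K*d*m - T) * ((SB + SG) - (K*d*m) - T) := by
    apply mul_pos (by linarith) (by linarith)
  have step3 : T*(SB+SG-T) < (K*d*m)*((SB+SG) - K*d*m) := by
    have expand : (K*d*m)*((SB+SG)-K*d*m) - T*(SB+SG-T)
        = (K*d*m - T)*((SB+SG) - K*d*m - T) := by ring
    linarith [hgap, expand]
  have hSBSG : SB + SG ≤ ((1+ε)*(q/p)*(s+d))*m := by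
    have expand : ((1+ε)*(q/p)*(s+d))*m = ((1+ε)*(q/p)*s)*m + ((1+ε)*(q/p)*d)*m := by ring
    linarith [hSB_ub, hSG_ub, expand]
  have step4 : (K*d*m)*((SB+SG) - K*d*m) ≤ (K*d*m)*(((1+ε)*(q/p)*(s+d))*m - K*d*m) := by
    have h0 : 0 ≤ K*d*m := by positivity
    apply mul_le_mul_of_nonneg_left (by linarith) h0
  have hA := keyA_div p q ε s d hp hp2 hq0 hq2 hd.le hs hε hε'
  rw [← hK] at hA
  have step6 : (K*d*m)*(((1+ε)*(q/p)*(s+d))*m - K*d*m) ≤ m^2 * (0.77^2*(1-ε)^2*s/q*d) := by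
    have h1 := mul_le_mul_of_nonneg_right hA hd.le
    calc (K*d*m)*(((1+ε)*(q/p)*(s+d))*m - K*d*m)
        = (K * ((1+ε)*(q/p)*(s+d) - K*d) * d) * m^2 := by ring
      _ ≤ (0.77^2*(1-ε)^2*s/q * d) * m^2 :=
          mul_le_mul_of_nonneg_right h1 (sq_nonneg _)
      _ = m^2 * (0.77^2*(1-ε)^2*s/q*d) := by ring
  have step7 : m^2 * (0.77^2*(1-ε)^2*s/q*d) ≤ m^2 * (0.77^2*(1-ε)^2*F) := by
    apply mul_le_mul_of_nonneg_left _ (sq_nonneg (m:ℝ))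
    have hsd : s*d/q ≤ F := by rw [div_le_iff₀ hq0]; linarith
    calc 0.77^2*(1-ε)^2*s/q*d = 0.77^2*(1-ε)^2*(s*d/q) := by ring
    _ ≤ 0.77^2*(1-ε)^2*F := by
        apply mul_le_mul_of_nonneg_left hsd (by positivity)
  have step8 : m^2 * (0.77^2*(1-ε)^2*F) ≤ S^2 := by
    have h1 : 0 ≤ (0.77*(1-ε)*Real.sqrt F)*m := by positivity
    have h2 := pow_le_pow_left₀ h1 hS_lb 2
    have h3 : ((0.77*(1-ε)*Real.sqrt F)*m)^2 = m^2 * (0.77^2*(1-ε)^2*F) := by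
      rw [mul_pow, mul_pow, mul_pow, Real.sq_sqrt hFnn]; ring
    linarith [h2, h3.symm.le, h3.le]
  linarith [hCS, step3, step4, step6, step7, step8]
theorem stmt_15 (m n : ℕ) (A : Fin m → Fin n → ℝ) (ε : ℝ) (hε0 : 0 < ε) (hε1 : ε < 0.01)
    (hconc : ∀ h : EuclideanSpace ℝ (Fin n),
      (1 - ε) * Real.sqrt (2 / Real.pi) * ‖h‖ ≤ (1 / m) * ∑ i, |∑ j, A i j * h j| ∧
      (1 / m) * ∑ i, |∑ j, A i j * h j| ≤ (1 + ε) * Real.sqrt (2 / Real.pi) * ‖h‖)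
    (hsqrt : ∀ x y : EuclideanSpace ℝ (Fin n),
      (1 / m) * ∑ i, Real.sqrt |(∑ j, A i j * x j) ^ 2 - (∑ j, A i j * y j) ^ 2| ≥
        0.77 * (1 - ε) * Real.sqrt (frobXY (fun i => x i) (fun i => y i))) :
    ∀ x y : EuclideanSpace ℝ (Fin n), ‖x + y‖ ≥ 10 * ‖x - y‖ →
      (1 / m) * ∑ i, |abs (∑ j, A i j * x j) - abs (∑ j, A i j * y j)| ≥
        (5 * 0.77 ^ 2 * Real.sqrt Real.pi * (1 - ε) ^ 2 /
            ((Real.sqrt 2 + 9) * (1 + ε))) * ‖x - y‖ ∧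
      (5 * 0.77 ^ 2 * Real.sqrt Real.pi * (1 - ε) ^ 2 /
            ((Real.sqrt 2 + 9) * (1 + ε))) * ‖x - y‖ ≥
        Real.sqrt (2 / Real.pi) * (2 - Real.sqrt 2) * ‖x - y‖ := by
  intro x y hxy
  have hp : 0 < Real.sqrt Real.pi := Real.sqrt_pos.2 Real.pi_pos
  have hp2 : (Real.sqrt Real.pi)^2 = Real.pi := Real.sq_sqrt Real.pi_pos.le
  have hq0 : 0 < Real.sqrt 2 := Real.sqrt_pos.2 (by norm_num)
  have hq2 : (Real.sqrt 2)^2 = 2 := Real.sq_sqrt (by norm_num)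
  have hc0 : Real.sqrt (2/Real.pi) = Real.sqrt 2 / Real.sqrt Real.pi :=
    Real.sqrt_div (by norm_num) _
  by_cases hd0 : ‖x - y‖ = 0
  · have hxe : x = y := by rwa [norm_eq_zero, sub_eq_zero] at hd0
    subst hxe
    rw [hd0]
    constructor
    · simp [sub_self, abs_zero]
    · simp
  · have hd : 0 < ‖x - y‖ := lt_of_le_of_ne (norm_nonneg _) (Ne.symm hd0)
    have hs10 : 10*‖x-y‖ ≤ ‖x+y‖ := hxy
    have hm : 0 < (m:ℝ) := by
      rcases Nat.eq_zero_or_pos m with h0 | h0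
      · exfalso
        subst h0
        have h := (hconc (x-y)).1
        simp at h
        have hpos : 0 < (1-ε)*(Real.sqrt 2/Real.sqrt Real.pi)*‖x-y‖ := by
          apply mul_pos (mul_pos (by linarith) (by positivity)) hd
        linarith
      · exact_mod_cast h0
    have hadd : ∀ i, (∑ j, A i j * (x + y) j) = (∑ j, A i j * x j) + (∑ j, A i j * y j) := by
      intro i
      rw [← Finset.sum_add_distrib]
      exact Finset.sum_congr rfl fun j _ => by simp [PiLp.add_apply, mul_add]
    have hsub : ∀ i, (∑ j, A i j * (x - y) j) = (∑ j, A i j * x j) - (∑ j, A i j * y j) := by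
      intro i
      rw [← Finset.sum_sub_distrib]
      exact Finset.sum_congr rfl fun j _ => by simp [PiLp.sub_apply, mul_sub]
    have hcadd := hconc (x+y)
    have hcsub := hconc (x-y)
    have hsq := hsqrt x y
    rw [show (∑ i, |∑ j, A i j * (x+y) j|)
        = ∑ i, |(∑ j, A i j * x j) + (∑ j, A i j * y j)| from
      Finset.sum_congr rfl fun i _ => by rw [hadd i]] at hcadd
    rw [show (∑ i, |∑ j, A i j * (x-y) j|)
        = ∑ i, |(∑ j, A i j * x j) - (∑ j, A i j * y j)| from
      Finset.sum_congr rfl fun i _ => by rw [hsub i]] at hcsub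
    rw [hc0] at hcadd hcsub
    set F : ℝ := frobXY (fun i => x i) (fun i => y i) with hFdef
    have hFnn : 0 ≤ F := Real.sqrt_nonneg _
    have hF : ‖x+y‖*‖x-y‖ ≤ Real.sqrt 2 * F := by
      have e1 : ‖x+y‖ = Real.sqrt (∑ i, (x i + y i)^2) := by
        rw [EuclideanSpace.norm_eq]
        congr 1
        exact Finset.sum_congr rfl fun i _ => by simp [Real.norm_eq_abs, sq_abs, PiLp.add_apply]
      have e2 : ‖x-y‖ = Real.sqrt (∑ i, (x i - y i)^2) := by
        rw [EuclideanSpace.norm_eq]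
        congr 1
        exact Finset.sum_congr rfl fun i _ => by simp [Real.norm_eq_abs, sq_abs, PiLp.sub_apply]
      rw [e1, e2]
      exact frob_ge (fun i => x i) (fun i => y i)
    have hSB_ub : ∑ i, |(∑ j, A i j * x j) + (∑ j, A i j * y j)|
        ≤ ((1+ε)*(Real.sqrt 2/Real.sqrt Real.pi)*‖x+y‖)*m := by
      have h := hcadd.2
      rw [one_div, inv_mul_eq_div, div_le_iff₀ hm] at h
      exact h
    have hSB_lb : ((1-ε)*(Real.sqrt 2/Real.sqrt Real.pi)*‖x+y‖)*m
        ≤ ∑ i, |(∑ j, A i j * x j) + (∑ j, A i j * y j)| := by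
      have h := hcadd.1
      rw [one_div, inv_mul_eq_div, le_div_iff₀ hm] at h
      exact h
    have hSG_ub : ∑ i, |(∑ j, A i j * x j) - (∑ j, A i j * y j)|
        ≤ ((1+ε)*(Real.sqrt 2/Real.sqrt Real.pi)*‖x-y‖)*m := by
      have h := hcsub.2
      rw [one_div, inv_mul_eq_div, div_le_iff₀ hm] at h
      exact h
    have hS_lb : (0.77*(1-ε)*Real.sqrt F)*m
        ≤ ∑ i, Real.sqrt |(∑ j, A i j * x j)^2 - (∑ j, A i j * y j)^2| := by
      have h := hsq
      rw [ge_iff_le, one_div, inv_mul_eq_div, le_div_iff₀ hm] at h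
      exact h
    have main := main_ineq m hm (fun i => ∑ j, A i j * x j) (fun i => ∑ j, A i j * y j)
      (Real.sqrt Real.pi) (Real.sqrt 2) ε ‖x+y‖ ‖x-y‖ F hp hp2 hq0 hq2 hε0 hε1 hd hs10
      hSB_ub hSB_lb hSG_ub hS_lb hFnn hF
    constructor
    · rw [ge_iff_le, one_div, inv_mul_eq_div, le_div_iff₀ hm]
      exact main
    · rw [ge_iff_le, hc0]
      exact mul_le_mul_of_nonneg_right
        (keyC_div (Real.sqrt Real.pi) (Real.sqrt 2) ε hp hp2 hq0 hq2 hε0 hε1) (norm_nonneg _)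
end

section
/- Let A ∈ ℝ^{m×n}, let s, ε ∈ (0,1), and let T ⊆ {1,…,m} with |T| = s·m. Suppose that (a) for all x, y ∈ ℝ^n, (1/m)·‖|Ax|² − |Ay|²‖₁ ≤ √2·(1+ε)·‖x xᵀ − y yᵀ‖_F, and (b) for all x, y ∈ ℝ^n, (1/((1−s)·m))·‖(|Ax|² − |Ay|²)_{T^c}‖₁ ≥ 0.9·(1−ε)·‖x xᵀ − y yᵀ‖_F. Then for all x, y ∈ ℝ^n, ‖(|Ax|² − |Ay|²)_T‖₁ ≤ ψ·‖(|Ax|² − |Ay|²)_{T^c}‖₁, where ψ := (√2·(1+ε) − 0.9·(1−ε)·(1−s)) / (0.9·(1−ε)·(1−s)). -/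
open Finset

/-
With `a = √2 (1 + ε)`, `c = 0.9 (1 − ε)(1 − s)` and `F = ‖x xᵀ − y yᵀ‖_F`, the whole ℓ₁ sum is at
most `a m F` while its `Tᶜ` part `S` is at least `c m F`. Hence the `T` part is at most
`a m F − S ≤ (a / c) S − S`.
-/

theorem le_sub_div_mul_of_add_le_of_mul_le {p q t a c : ℝ} (ha : 0 ≤ a) (hc : 0 < c)
    (hsum : p + q ≤ a * t) (hq : c * t ≤ q) : p ≤ (a - c) / c * q := by
  have ht : a * t ≤ a / c * q := by
    rw [div_mul_eq_mul_div, le_div_iff₀ hc]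
    nlinarith
  calc p ≤ a * t - q := by linarith
    _ ≤ a / c * q - q := by linarith
    _ = (a - c) / c * q := by field_simp

theorem sum_le_mul_sum_compl_of_mean_bounds {ι : Type*} [Fintype ι] [DecidableEq ι]
    (f : ι → ℝ) (T : Finset ι)
    {a b r F : ℝ} (ha : 0 ≤ a) (hb : 0 < b) (hr : 0 < r)
    (hmean : (1 / Fintype.card ι) * ∑ i, f i ≤ a * F)
    (hmean_compl : (1 / (r * Fintype.card ι)) * ∑ i ∈ Tᶜ, f i ≥ b * F) :
    ∑ i ∈ T, f i ≤ (a - b * r) / (b * r) * ∑ i ∈ Tᶜ, f i := by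
  rcases isEmpty_or_nonempty ι with hι | hι
  · simp [eq_empty_of_isEmpty T]
  have hcard : (0 : ℝ) < Fintype.card ι := by exact_mod_cast Fintype.card_pos
  apply le_sub_div_mul_of_add_le_of_mul_le ha (mul_pos hb hr) (t := F * Fintype.card ι)
  · rw [sum_add_sum_compl]
    rw [one_div_mul_eq_div, div_le_iff₀ hcard] at hmean
    linarith
  · rw [ge_iff_le, one_div_mul_eq_div, le_div_iff₀ (mul_pos hr hcard)] at hmean_compl
    linarith

theorem stmt_16_general (m n : ℕ) (A : Fin m → Fin n → ℝ) (s ε : ℝ)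
    (hs : s ∈ Set.Ioo (0:ℝ) 1) (hε : ε ∈ Set.Ioo (0:ℝ) 1)
    (T : Finset (Fin m))
    (ha : ∀ x y : Fin n → ℝ,
      (1 / m) * ∑ i, |(∑ j, A i j * x j) ^ 2 - (∑ j, A i j * y j) ^ 2| ≤
        Real.sqrt 2 * (1 + ε) * frobXY x y)
    (hb : ∀ x y : Fin n → ℝ,
      (1 / ((1 - s) * m)) * ∑ i ∈ Tᶜ, |(∑ j, A i j * x j) ^ 2 - (∑ j, A i j * y j) ^ 2| ≥
        0.9 * (1 - ε) * frobXY x y) :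
    ∀ x y : Fin n → ℝ,
      ∑ i ∈ T, |(∑ j, A i j * x j) ^ 2 - (∑ j, A i j * y j) ^ 2| ≤
        ((Real.sqrt 2 * (1 + ε) - 0.9 * (1 - ε) * (1 - s)) / (0.9 * (1 - ε) * (1 - s))) *
          ∑ i ∈ Tᶜ, |(∑ j, A i j * x j) ^ 2 - (∑ j, A i j * y j) ^ 2| := by
  intro x y
  have hε1 : 0 < 1 - ε := by linarith [hε.2]
  have hs1 : 0 < 1 - s := by linarith [hs.2]
  exact sum_le_mul_sum_compl_of_mean_bounds _ T
    (mul_nonneg (Real.sqrt_nonneg 2) (by linarith [hε.1])) (by positivity) hs1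
    (by simpa using ha x y) (by simpa using hb x y)

theorem stmt_16 (m n : ℕ) (A : Fin m → Fin n → ℝ) (s ε : ℝ)
    (hs : s ∈ Set.Ioo (0:ℝ) 1) (hε : ε ∈ Set.Ioo (0:ℝ) 1)
    (T : Finset (Fin m)) (hT : (T.card : ℝ) = s * m)
    (ha : ∀ x y : Fin n → ℝ,
      (1 / m) * ∑ i, |(∑ j, A i j * x j) ^ 2 - (∑ j, A i j * y j) ^ 2| ≤
        Real.sqrt 2 * (1 + ε) * frobXY x y)
    (hb : ∀ x y : Fin n → ℝ,
      (1 / ((1 - s) * m)) * ∑ i ∈ Tᶜ, |(∑ j, A i j * x j) ^ 2 - (∑ j, A i j * y j) ^ 2| ≥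
        0.9 * (1 - ε) * frobXY x y) :
    ∀ x y : Fin n → ℝ,
      ∑ i ∈ T, |(∑ j, A i j * x j) ^ 2 - (∑ j, A i j * y j) ^ 2| ≤
        ((Real.sqrt 2 * (1 + ε) - 0.9 * (1 - ε) * (1 - s)) / (0.9 * (1 - ε) * (1 - s))) *
          ∑ i ∈ Tᶜ, |(∑ j, A i j * x j) ^ 2 - (∑ j, A i j * y j) ^ 2| :=
  stmt_16_general m n A s ε hs hε T ha hb
end

section
/- Let A ∈ ℝ^{m×n}, let s, ε ∈ (0,1), and let T ⊆ {1,…,m} with |T| = s·m. Suppose that (a) for all x, y ∈ ℝ^n, (1/m)·‖|Ax| − |Ay|‖₁ ≤ √(2/π)·(1+ε)·min{‖x+y‖, ‖x−y‖}, and (b) for all x, y ∈ ℝ^n, (1/((1−s)·m))·‖(|Ax| − |Ay|)_{T^c}‖₁ ≥ √(2/π)·(2−√2)·(1−ε)·min{‖x+y‖, ‖x−y‖}. Then for all x, y ∈ ℝ^n, ‖(|Ax| − |Ay|)_T‖₁ ≤ ψ·‖(|Ax| − |Ay|)_{T^c}‖₁, where ψ := ((1+ε) − (2−√2)·(1−ε)·(1−s))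 / ((2−√2)·(1−ε)·(1−s)). -/
/-!
Write `S` and `R` for the ℓ₁ mass of `|Ax| - |Ay|` on `T` and on `Tᶜ`, and
`K = m √(2/π) min{‖x+y‖, ‖x-y‖}`. The growth bound (a) says `S + R ≤ (1 + ε) K`, and the lower bound (b) says `β K ≤ R` with
`β = (2 - √2)(1 - ε)(1 - s) > 0`. Eliminating `K` gives `S ≤ (1 + ε) R / β - R = ψ R`.
-/

open Finset

theorem sum_le_mul_sum_compl_of_sum_le_of_le_sum_compl {ι : Type*} [Fintype ι] [DecidableEq ι]
    (T : Finset ι) (f : ι → ℝ) {α β K : ℝ} (hα : 0 ≤ α) (hβ : 0 < β)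
    (htotal : ∑ i, f i ≤ α * K) (hcompl : β * K ≤ ∑ i ∈ Tᶜ, f i) :
    ∑ i ∈ T, f i ≤ (α - β) / β * ∑ i ∈ Tᶜ, f i := by
  have hK : K ≤ (∑ i ∈ Tᶜ, f i) / β := (le_div_iff₀ hβ).2 (by linarith)
  calc ∑ i ∈ T, f i = ∑ i, f i - ∑ i ∈ Tᶜ, f i := by rw [← sum_add_sum_compl T f]; ring
    _ ≤ α * K - ∑ i ∈ Tᶜ, f i := by gcongr
    _ ≤ α * ((∑ i ∈ Tᶜ, f i) / β) - ∑ i ∈ Tᶜ, f i := by gcongr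
    _ = (α - β) / β * ∑ i ∈ Tᶜ, f i := by field_simp

theorem stmt_17_general (m n : ℕ) (A : Fin m → Fin n → ℝ) (s ε : ℝ)
    (hs : s ∈ Set.Ioo (0:ℝ) 1) (hε : ε ∈ Set.Ioo (0:ℝ) 1)
    (T : Finset (Fin m))
    (ha : ∀ x y : EuclideanSpace ℝ (Fin n),
      (1 / m) * ∑ i, |abs (∑ j, A i j * x j) - abs (∑ j, A i j * y j)| ≤
        Real.sqrt (2 / Real.pi) * (1 + ε) * min ‖x + y‖ ‖x - y‖)
    (hb : ∀ x y : EuclideanSpace ℝ (Fin n),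
      (1 / ((1 - s) * m)) * ∑ i ∈ Tᶜ, |abs (∑ j, A i j * x j) - abs (∑ j, A i j * y j)| ≥
        Real.sqrt (2 / Real.pi) * (2 - Real.sqrt 2) * (1 - ε) * min ‖x + y‖ ‖x - y‖) :
    ∀ x y : EuclideanSpace ℝ (Fin n),
      ∑ i ∈ T, |abs (∑ j, A i j * x j) - abs (∑ j, A i j * y j)| ≤
        (((1 + ε) - (2 - Real.sqrt 2) * (1 - ε) * (1 - s)) /
            ((2 - Real.sqrt 2) * (1 - ε) * (1 - s))) *
          ∑ i ∈ Tᶜ, |abs (∑ j, A i j * x j) - abs (∑ j, A i j * y j)| := by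
  intro x y
  rcases Nat.eq_zero_or_pos m with rfl | hm
  · simp [eq_empty_of_isEmpty T]
  have hm' : (0 : ℝ) < m := by exact_mod_cast hm
  have hs' : (0 : ℝ) < 1 - s := by linarith [hs.2]
  have hε' : (0 : ℝ) < 1 - ε := by linarith [hε.2]
  have hsqrt2 : (0 : ℝ) < 2 - Real.sqrt 2 := by
    linarith [(Real.sqrt_lt' (by norm_num : (0 : ℝ) < 2)).2 (by norm_num : (2 : ℝ) < 2 ^ 2)]
  refine sum_le_mul_sum_compl_of_sum_le_of_le_sum_compl T _
    (K := m * (Real.sqrt (2 / Real.pi) * min ‖x + y‖ ‖x - y‖)) (by linarith [hε.1])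
    (by positivity) ?_ ?_
  · have h := (inv_mul_le_iff₀ hm').1 (by simpa only [one_div] using ha x y)
    linarith
  · have h := (le_inv_mul_iff₀ (mul_pos hs' hm')).1 (by simpa only [one_div] using hb x y)
    linarith

theorem stmt_17 (m n : ℕ) (A : Fin m → Fin n → ℝ) (s ε : ℝ)
    (hs : s ∈ Set.Ioo (0:ℝ) 1) (hε : ε ∈ Set.Ioo (0:ℝ) 1)
    (T : Finset (Fin m)) (hT : (T.card : ℝ) = s * m)
    (ha : ∀ x y : EuclideanSpace ℝ (Fin n),
      (1 / m) * ∑ i, |abs (∑ j, A i j * x j) - abs (∑ j, A i j * y j)| ≤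
        Real.sqrt (2 / Real.pi) * (1 + ε) * min ‖x + y‖ ‖x - y‖)
    (hb : ∀ x y : EuclideanSpace ℝ (Fin n),
      (1 / ((1 - s) * m)) * ∑ i ∈ Tᶜ, |abs (∑ j, A i j * x j) - abs (∑ j, A i j * y j)| ≥
        Real.sqrt (2 / Real.pi) * (2 - Real.sqrt 2) * (1 - ε) * min ‖x + y‖ ‖x - y‖) :
    ∀ x y : EuclideanSpace ℝ (Fin n),
      ∑ i ∈ T, |abs (∑ j, A i j * x j) - abs (∑ j, A i j * y j)| ≤
        (((1 + ε) - (2 - Real.sqrt 2) * (1 - ε) * (1 - s)) /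
            ((2 - Real.sqrt 2) * (1 - ε) * (1 - s))) *
          ∑ i ∈ Tᶜ, |abs (∑ j, A i j * x j) - abs (∑ j, A i j * y j)| :=
  stmt_17_general m n A s ε hs hε T ha hb
end

section
/- Let A ∈ ℝ^{m×n} have rows a_1,…,a_m and let ε ∈ (0,1). Suppose that for every symmetric matrix M ∈ ℝ^{n×n} of rank at most 2, (1/m)·Σ_{i=1}^m |a_i M a_iᵀ| ≤ √2·(1+ε)·‖M‖_F. Then for all h, h₀ ∈ ℝ^n with ‖h‖ = ‖h₀‖ = 1 and ‖h − h₀‖ ≤ ε, | (1/m)·Σ_{i=1}^m |⟨a_i,h⟩| − (1/m)·Σ_{i=1}^m |⟨a_i,h₀⟩| | ≤ 2^{5/4}·√ε. -/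
/-- Frobenius norm of a square matrix. -/
noncomputable def frobNorm {n : ℕ} (M : Matrix (Fin n) (Fin n) ℝ) : ℝ :=
  Real.sqrt (∑ i, ∑ j, (M i j) ^ 2)

lemma rank_add_le' {n : ℕ} (A B : Matrix (Fin n) (Fin n) ℝ) :
    (A + B).rank ≤ A.rank + B.rank := by
  simp only [Matrix.rank]
  have h1 : LinearMap.range (A + B).mulVecLin ≤
      LinearMap.range A.mulVecLin ⊔ LinearMap.range B.mulVecLin := by
    rintro x ⟨y, rfl⟩
    rw [Matrix.mulVecLin_add]
    exact Submodule.add_mem_sup ⟨y, rfl⟩ ⟨y, rfl⟩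
  calc Module.finrank ℝ (LinearMap.range (A + B).mulVecLin)
      ≤ Module.finrank ℝ (LinearMap.range A.mulVecLin ⊔ LinearMap.range B.mulVecLin :
          Submodule ℝ _) := Submodule.finrank_mono h1
    _ ≤ _ := Submodule.finrank_add_le_finrank_add_finrank _ _

lemma rank_vecMulVec_le' {n : ℕ} (w v : Fin n → ℝ) :
    (Matrix.vecMulVec w v).rank ≤ 1 := by
  rw [Matrix.vecMulVec_eq (Fin 1)]
  calc (Matrix.replicateCol (Fin 1) w * Matrix.replicateRow (Fin 1) v).rank
      ≤ (Matrix.replicateCol (Fin 1) w).rank := Matrix.rank_mul_le_left _ _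
    _ ≤ Fintype.card (Fin 1) := Matrix.rank_le_card_width _
    _ = 1 := by simp

lemma key_sq' {a b : ℝ} (ha : 0 ≤ a) (hb : 0 ≤ b) : (a - b)^2 ≤ |a^2 - b^2| := by
  rcases le_total a b with hab | hab
  · rw [abs_of_nonpos (by nlinarith)]; nlinarith
  · rw [abs_of_nonneg (by nlinarith)]; nlinarith

theorem stmt_19 (m n : ℕ) (A : Fin m → Fin n → ℝ) (ε : ℝ) (hε : ε ∈ Set.Ioo (0:ℝ) 1)
    (hquad : ∀ M : Matrix (Fin n) (Fin n) ℝ, M.IsSymm → M.rank ≤ 2 →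
      (1 / m) * ∑ i, |∑ j, ∑ k, A i j * M j k * A i k| ≤
        Real.sqrt 2 * (1 + ε) * frobNorm M) :
    ∀ h h₀ : EuclideanSpace ℝ (Fin n), ‖h‖ = 1 → ‖h₀‖ = 1 → ‖h - h₀‖ ≤ ε →
      abs ((1 / m) * ∑ i, |∑ j, A i j * h j| - (1 / m) * ∑ i, |∑ j, A i j * h₀ j|) ≤
        (2 : ℝ) ^ ((5 : ℝ) / 4) * Real.sqrt ε := by
  obtain ⟨hε0, hε1⟩ := hε
  intro h h₀ hn hn0 hd
  have h25 : (2:ℝ) ≤ (2:ℝ) ^ ((5:ℝ)/4) := by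
    nth_rewrite 1 [show (2:ℝ) = 2 ^ (1:ℝ) by norm_num]
    exact Real.rpow_le_rpow_left_iff (by norm_num) |>.mpr (by norm_num)
  have hsε : 0 ≤ Real.sqrt ε := Real.sqrt_nonneg _
  -- reduce to showing LHS ≤ 2 * sqrt ε
  suffices H : abs ((1 / m) * ∑ i, |∑ j, A i j * h j| - (1 / m) * ∑ i, |∑ j, A i j * h₀ j|) ≤
      2 * Real.sqrt ε by
    exact H.trans (mul_le_mul_of_nonneg_right h25 hsε)
  rcases Nat.eq_zero_or_pos m with rfl | hm
  · simp
  have hm' : (0:ℝ) < m := by exact_mod_cast hm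
  set x : Fin m → ℝ := fun i => ∑ j, A i j * h j with hx
  set y : Fin m → ℝ := fun i => ∑ j, A i j * h₀ j with hy
  set M : Matrix (Fin n) (Fin n) ℝ :=
    Matrix.vecMulVec (fun j => h j) (fun j => h j) -
    Matrix.vecMulVec (fun j => h₀ j) (fun j => h₀ j) with hM
  have hMsymm : M.IsSymm := by
    unfold Matrix.IsSymm
    ext j k
    simp [hM, Matrix.vecMulVec_apply, Matrix.transpose_apply]
    ring
  have hMrank : M.rank ≤ 2 := by
    rw [hM, sub_eq_add_neg]
    have hneg : -Matrix.vecMulVec (fun j => h₀ j) (fun j => h₀ j) =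
        Matrix.vecMulVec (fun j => -(h₀ j)) (fun j => h₀ j) := by
      ext j k; simp [Matrix.vecMulVec_apply]
    rw [hneg]
    calc _ ≤ _ := rank_add_le' _ _
      _ ≤ 1 + 1 := add_le_add (rank_vecMulVec_le' _ _) (rank_vecMulVec_le' _ _)
      _ = 2 := rfl
  -- quadratic form evaluates to x i ^ 2 - y i ^ 2
  have hform : ∀ i, ∑ j, ∑ k, A i j * M j k * A i k = (x i)^2 - (y i)^2 := by
    intro i
    rw [hx, hy]
    simp only [pow_two]
    rw [Finset.sum_mul_sum, Finset.sum_mul_sum, ← Finset.sum_sub_distrib]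
    refine Finset.sum_congr rfl fun j _ => ?_
    rw [← Finset.sum_sub_distrib]
    refine Finset.sum_congr rfl fun k _ => ?_
    simp [hM, Matrix.vecMulVec_apply, Matrix.sub_apply]
    ring
  -- norm facts
  have hp : ∑ j, (h j)^2 = 1 := by
    have h2 : Real.sqrt (∑ j, ‖h j‖^2) = 1 := by rw [← EuclideanSpace.norm_eq, hn]
    simpa [sq_abs] using Real.sqrt_eq_one.mp h2
  have hq : ∑ j, (h₀ j)^2 = 1 := by
    have h2 : Real.sqrt (∑ j, ‖h₀ j‖^2) = 1 := by rw [← EuclideanSpace.norm_eq, hn0]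
    simpa [sq_abs] using Real.sqrt_eq_one.mp h2
  set c : ℝ := ∑ j, h j * h₀ j with hc
  have hdiff : ∑ j, (h j - h₀ j)^2 = 2 - 2*c := by
    have : ∀ j, (h j - h₀ j)^2 = (h j)^2 + (h₀ j)^2 - 2*(h j * h₀ j) := fun j => by ring
    simp_rw [this, Finset.sum_sub_distrib, Finset.sum_add_distrib, hp, hq, ← Finset.mul_sum, ← hc]
    ring
  have hdle : 2 - 2*c ≤ ε^2 := by
    rw [← hdiff]
    have h1 : ‖h - h₀‖^2 = ∑ j, (h j - h₀ j)^2 := by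
      rw [EuclideanSpace.norm_eq, Real.sq_sqrt (by positivity)]
      simp [sq_abs]
    calc ∑ j, (h j - h₀ j)^2 = ‖h - h₀‖^2 := h1.symm
      _ ≤ ε^2 := by nlinarith [norm_nonneg (h - h₀)]
  have hcle : 2 - 2*c ≥ 0 := by rw [← hdiff]; positivity
  have hcge : 2 + 2*c ≥ 0 := by
    have : ∑ j, (h j + h₀ j)^2 = 2 + 2*c := by
      have : ∀ j, (h j + h₀ j)^2 = (h j)^2 + (h₀ j)^2 + 2*(h j * h₀ j) := fun j => by ring
      simp_rw [this, Finset.sum_add_distrib, hp, hq, ← Finset.mul_sum, ← hc]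
      ring
    rw [← this]; positivity
  -- Frobenius norm bound
  have hfrob : frobNorm M ≤ Real.sqrt 2 * ε := by
    have hsum : ∑ j, ∑ k, (M j k)^2 = 2 - 2*c^2 := by
      have expand : ∀ j k, (M j k)^2 =
          (h j)^2 * (h k)^2 + (h₀ j)^2 * (h₀ k)^2 - 2 * ((h j * h₀ j) * (h k * h₀ k)) := by
        intro j k
        simp [hM, Matrix.vecMulVec_apply, Matrix.sub_apply]
        ring
      simp_rw [expand, Finset.sum_sub_distrib, Finset.sum_add_distrib, ← Finset.mul_sum,
        ← Finset.sum_mul, hp, hq, ← hc]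
      ring
    rw [frobNorm, hsum]
    have h2ε : 2 - 2*c^2 ≤ 2*ε^2 := by nlinarith
    calc Real.sqrt (2 - 2*c^2) ≤ Real.sqrt (2*ε^2) := Real.sqrt_le_sqrt h2ε
      _ = Real.sqrt 2 * ε := by
          rw [Real.sqrt_mul (by norm_num), Real.sqrt_sq hε0.le]
  -- apply hquad
  have hQ : (1 / m) * ∑ i, |(x i)^2 - (y i)^2| ≤ 4 * ε := by
    have := hquad M hMsymm hMrank
    simp_rw [hform] at this
    calc (1 / m) * ∑ i, |(x i)^2 - (y i)^2|
        ≤ Real.sqrt 2 * (1 + ε) * frobNorm M := this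
      _ ≤ Real.sqrt 2 * (1 + ε) * (Real.sqrt 2 * ε) := by
          apply mul_le_mul_of_nonneg_left hfrob
          positivity
      _ = (Real.sqrt 2 * Real.sqrt 2) * ((1 + ε) * ε) := by ring
      _ = 2 * ((1 + ε) * ε) := by rw [Real.mul_self_sqrt (by norm_num)]
      _ ≤ 4 * ε := by nlinarith
  -- Cauchy–Schwarz step
  set d : Fin m → ℝ := fun i => |x i| - |y i| with hdd
  have hCS : (∑ i, |d i|)^2 ≤ m * ∑ i, (d i)^2 := by
    have := sq_sum_le_card_mul_sum_sq (s := Finset.univ) (f := fun i => |d i|)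
    simpa [sq_abs] using this
  have hdsq : ∀ i, (d i)^2 ≤ |(x i)^2 - (y i)^2| := by
    intro i
    have := key_sq' (abs_nonneg (x i)) (abs_nonneg (y i))
    simpa [sq_abs] using this
  set L : ℝ := (1/m) * ∑ i, |d i| with hL
  have hL0 : 0 ≤ L := by positivity
  have hLsq : L^2 ≤ 4 * ε := by
    have h1 : (∑ i, |d i|)^2 ≤ m * ∑ i, |(x i)^2 - (y i)^2| := by
      calc (∑ i, |d i|)^2 ≤ m * ∑ i, (d i)^2 := hCS
        _ ≤ m * ∑ i, |(x i)^2 - (y i)^2| := by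
            apply mul_le_mul_of_nonneg_left _ hm'.le
            exact Finset.sum_le_sum fun i _ => hdsq i
    have : L^2 = (1/m)^2 * (∑ i, |d i|)^2 := by rw [hL]; ring
    rw [this]
    calc (1/m:ℝ)^2 * (∑ i, |d i|)^2 ≤ (1/m)^2 * (m * ∑ i, |(x i)^2 - (y i)^2|) := by
          apply mul_le_mul_of_nonneg_left h1; positivity
      _ = (1/m) * ∑ i, |(x i)^2 - (y i)^2| := by field_simp
      _ ≤ 4 * ε := hQ
  have hLle : L ≤ 2 * Real.sqrt ε := by
    have : L ≤ Real.sqrt (4 * ε) := (Real.le_sqrt hL0 (by positivity)).mpr hLsq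
    calc L ≤ Real.sqrt (4 * ε) := this
      _ = 2 * Real.sqrt ε := by
          rw [Real.sqrt_mul (by norm_num), show Real.sqrt 4 = 2 by
            rw [show (4:ℝ) = 2^2 by norm_num, Real.sqrt_sq (by norm_num)]]
  -- conclude
  calc abs ((1 / m) * ∑ i, |x i| - (1 / m) * ∑ i, |y i|)
      = (1/m) * |∑ i, (|x i| - |y i|)| := by
        rw [← mul_sub, abs_mul, Finset.sum_sub_distrib]
        congr 1
        rw [abs_of_nonneg (by positivity)]
    _ ≤ (1/m) * ∑ i, |d i| := by
        apply mul_le_mul_of_nonneg_left _ (by positivity)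
        exact Finset.abs_sum_le_sum_abs _ _
    _ ≤ 2 * Real.sqrt ε := hLle
end
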